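/- arXiv:1603.00325 — 4 statements merged into one kernel-verified Lean document; each statement's English description precedes it below -/
import Mathlib

section
/- Let TP(u,v) be a non-degenerate transportation polytope and let y and y' be two distinct vertices of TP(u,v) with support trees C and C'. Then y and y' are adjacent in the graph of TP(u,v) if and only if the union C ∪ C' (as edge sets of the complete bipartite graph K_{N1,N2}) contains exactly one cycle. -/
open scoped BigOperators

def TP (N1 N2 : ℕ) (u : Fin N1 → ℝ) (v : Fin N2 → ℝ) :
    Set (Matrix (Fin N1) (Fin N2) ℝ) :=
  {y | (∀ i j, 0 ≤ y i j) ∧ (∀ i, ∑ j, y i j = u i) ∧ (∀ j, ∑ i, y i j = v j)}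

def suppSet {N1 N2 : ℕ} (y : Matrix (Fin N1) (Fin N2) ℝ) : Set (Fin N1 × Fin N2) :=
  {p | 0 < y p.1 p.2}

def Nondeg (N1 N2 : ℕ) (u : Fin N1 → ℝ) (v : Fin N2 → ℝ) : Prop :=
  ∀ y ∈ Set.extremePoints ℝ (TP N1 N2 u v),
    {p : Fin N1 × Fin N2 | y p.1 p.2 ≠ 0}.ncard = N1 + N2 - 1

def IsCycleSet {N1 N2 : ℕ} (D : Set (Fin N1 × Fin N2)) : Prop :=
  ∃ k : ℕ, 2 ≤ k ∧ ∃ (σ : ZMod k → Fin N1) (δ : ZMod k → Fin N2),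
    Function.Injective σ ∧ Function.Injective δ ∧
    D = {p | ∃ t, p = (σ t, δ t)} ∪ {p | ∃ t, p = (σ (t + 1), δ t)}

/-! Differences of points of `TP u v` are *balanced*: all their row and column sums vanish.
Following a non-backtracking walk in the support of a nonzero balanced matrix until it revisits a
vertex shows that this support contains a cycle, and conversely the alternating `±1` matrix of a
cycle is balanced.

If `[y, y']` is a face, moving from its midpoint along any cycle of `supp y ∪ supp y'` stays in the
polytope, hence in `[y, y']`, so every such cycle is the support of `y' - y`. If instead that union
contains a single cycle, the balanced matrices supported in it form a line. An open segment of the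
polytope through a point of `[y, y']` is supported in the union, so it lies on the line through
`y` and `y'`, and since `y` and `y'` are vertices it lies in `[y, y']`. -/

open Finset

namespace Matrix

variable {m n R : Type*}

def entrySupport [Zero R] (w : Matrix m n R) : Set (m × n) :=
  {p | w p.1 p.2 ≠ 0}

@[simp]
theorem mem_entrySupport [Zero R] {w : Matrix m n R} {p : m × n} :
    p ∈ w.entrySupport ↔ w p.1 p.2 ≠ 0 :=
  Iff.rfl

theorem entrySupport_sub_subset [AddGroup R] (a b : Matrix m n R) :
    (a - b).entrySupport ⊆ a.entrySupport ∪ b.entrySupport := by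
  intro p hp
  by_contra h
  simp_all

theorem entrySupport_smul_subset [MulZeroClass R] (c : R) (w : Matrix m n R) :
    (c • w).entrySupport ⊆ w.entrySupport := by
  intro p hp h
  simp [h] at hp

theorem entrySupport_smul [MulZeroClass R] [NoZeroDivisors R] {c : R} (hc : c ≠ 0)
    (w : Matrix m n R) : (c • w).entrySupport = w.entrySupport := by
  ext p
  simp [hc]

theorem entrySupport_subset_of_mem_segment {x y y' : Matrix m n ℝ} (hx : x ∈ segment ℝ y y') :
    x.entrySupport ⊆ y.entrySupport ∪ y'.entrySupport := by
  obtain ⟨a, b, -, -, -, rfl⟩ := hx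
  intro p hp
  by_contra h
  simp_all

theorem entrySupport_subset_of_mem_openSegment {x x₁ x₂ : Matrix m n ℝ}
    (h₁ : ∀ i j, 0 ≤ x₁ i j) (h₂ : ∀ i j, 0 ≤ x₂ i j) (hx : x ∈ openSegment ℝ x₁ x₂) :
    x₁.entrySupport ⊆ x.entrySupport := by
  obtain ⟨a, b, ha, hb, -, rfl⟩ := hx
  intro p hp h0
  simp only [mem_entrySupport, Matrix.add_apply, Matrix.smul_apply, smul_eq_mul] at hp h0
  exact hp (by nlinarith [mul_nonneg ha.le (h₁ p.1 p.2), mul_nonneg hb.le (h₂ p.1 p.2)])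

def balanced (R : Type*) [Semiring R] (m n : Type*) [Fintype m] [Fintype n] :
    Submodule R (Matrix m n R) where
  carrier := {w | (∀ i, ∑ j, w i j = 0) ∧ ∀ j, ∑ i, w i j = 0}
  add_mem' ha hb := ⟨fun i => by simp [sum_add_distrib, ha.1, hb.1],
    fun j => by simp [sum_add_distrib, ha.2, hb.2]⟩
  zero_mem' := by simp
  smul_mem' c w hw := ⟨fun i => by simp [← mul_sum, hw.1], fun j => by simp [← mul_sum, hw.2]⟩

end Matrix

open Matrix

theorem suppSet_eq_entrySupport {N1 N2 : ℕ} {y : Matrix (Fin N1) (Fin N2) ℝ}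
    (hy : ∀ i j, 0 ≤ y i j) : suppSet y = y.entrySupport := by
  ext p
  exact (hy p.1 p.2).lt_iff_ne'

theorem ZMod.add_one_ne_self {k : ℕ} (hk : 2 ≤ k) (t : ZMod k) : t + 1 ≠ t := by
  have : Fact (1 < k) := ⟨hk⟩
  simp

section CycleMatrix

variable (R : Type*) [Ring R] {N1 N2 k : ℕ} [NeZero k]

noncomputable def cycleMatrix (σ : ZMod k → Fin N1) (δ : ZMod k → Fin N2) :
    Matrix (Fin N1) (Fin N2) R :=
  ∑ t, (single (σ t) (δ t) 1 - single (σ (t + 1)) (δ t) 1)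

variable {R} {σ : ZMod k → Fin N1} {δ : ZMod k → Fin N2}

theorem cycleMatrix_mem_balanced : cycleMatrix R σ δ ∈ balanced R (Fin N1) (Fin N2) := by
  refine ⟨fun i => ?_, fun j => ?_⟩
  · have hrow (a : Fin N1) (b : Fin N2) :
        ∑ j, single a b (1 : R) i j = if a = i then 1 else 0 := by
      simp [single_apply, ite_and]
    simp only [cycleMatrix, Matrix.sum_apply, Matrix.sub_apply]
    rw [sum_comm]
    simp only [sum_sub_distrib, hrow]
    exact sub_eq_zero.2
      (Equiv.sum_comp (Equiv.addRight 1) (fun t => if σ t = i then (1 : R) else 0)).symm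
  · simp only [cycleMatrix, Matrix.sum_apply, Matrix.sub_apply, single_apply, ite_and]
    rw [sum_comm]
    simp

theorem cycleMatrix_apply_right (hδ : Function.Injective δ) (i : Fin N1) (s : ZMod k) :
    cycleMatrix R σ δ i (δ s) =
      (if σ s = i then 1 else 0) - (if σ (s + 1) = i then 1 else 0) := by
  simp only [cycleMatrix, Matrix.sum_apply, Matrix.sub_apply, single_apply, hδ.eq_iff]
  rw [sum_eq_single s (fun t _ hts => by simp [hts]) (by simp)]
  simp

theorem cycleMatrix_apply_of_notMem_range {j : Fin N2} (hj : j ∉ Set.range δ) (i : Fin N1) :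
    cycleMatrix R σ δ i j = 0 := by
  refine (Matrix.sum_apply _ _ _ _).trans (sum_eq_zero fun t _ => ?_)
  have : δ t ≠ j := fun h => hj ⟨t, h⟩
  simp [this]

theorem entrySupport_cycleMatrix [Nontrivial R] (hk : 2 ≤ k) (hσ : Function.Injective σ)
    (hδ : Function.Injective δ) :
    (cycleMatrix R σ δ).entrySupport =
      {p | ∃ t, p = (σ t, δ t)} ∪ {p | ∃ t, p = (σ (t + 1), δ t)} := by
  ext ⟨i, j⟩
  by_cases hj : j ∈ Set.range δ
  · obtain ⟨s, rfl⟩ := hj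
    have hs : σ (s + 1) ≠ σ s := hσ.ne (ZMod.add_one_ne_self hk s)
    simp only [mem_entrySupport, cycleMatrix_apply_right hδ, Set.mem_union, Set.mem_ofPred_eq,
      Prod.mk.injEq, hδ.eq_iff, exists_eq_right']
    by_cases h1 : σ s = i <;> by_cases h2 : σ (s + 1) = i <;> simp_all [eq_comm]
  · have h : ∀ t, j ≠ δ t := fun t h => hj ⟨t, h.symm⟩
    simp [cycleMatrix_apply_of_notMem_range hj, h]

end CycleMatrix

theorem Set.injOn_of_lt_imp_ne {α β : Type*} [LinearOrder α] {f : α → β} {s : Set α}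
    (h : ∀ a ∈ s, ∀ b ∈ s, a < b → f a ≠ f b) : s.InjOn f := by
  intro a ha b hb hab
  by_contra hne
  rcases lt_or_gt_of_ne hne with hlt | hlt
  exacts [h a ha b hb hlt hab, h b hb a ha hlt hab.symm]

section Walk

variable {N1 N2 : ℕ} {S : Set (Fin N1 × Fin N2)} {I : ℕ → Fin N1} {J : ℕ → Fin N2}

/-- The walk `I 0, J 0, I 1, J 1, …` alternating between rows and columns along edges of `S`. -/
def IsAltWalk (S : Set (Fin N1 × Fin N2)) (I : ℕ → Fin N1) (J : ℕ → Fin N2) : Prop :=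
  ∀ n, (I n, J n) ∈ S ∧ (I (n + 1), J n) ∈ S

theorem IsAltWalk.swap (h : IsAltWalk S I J) :
    IsAltWalk (Prod.swap ⁻¹' S) J (fun n => I (n + 1)) :=
  fun n => ⟨(h n).2, (h (n + 1)).1⟩

theorem IsCycleSet.preimage_swap {D : Set (Fin N2 × Fin N1)} (h : IsCycleSet D) :
    IsCycleSet (Prod.swap ⁻¹' D) := by
  obtain ⟨k, hk, σ, δ, hσ, hδ, rfl⟩ := h
  refine ⟨k, hk, fun s => δ (-s), fun s => σ (-s), hδ.comp neg_injective,
    hσ.comp neg_injective, ?_⟩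
  ext ⟨i, j⟩
  simp only [Set.mem_preimage, Prod.swap_prod_mk, Set.mem_union, Set.mem_ofPred_eq,
    Prod.mk.injEq]
  constructor
  · rintro (⟨t, hj, hi⟩ | ⟨t, hj, hi⟩)
    · exact .inl ⟨-t, by rw [neg_neg, hi], by rw [neg_neg, hj]⟩
    · exact .inr ⟨-(t + 1), by rw [hi]; congr 1; ring, by rw [neg_neg, hj]⟩
  · rintro (⟨s, hi, hj⟩ | ⟨s, hi, hj⟩)
    · exact .inl ⟨-s, hj, hi⟩
    · exact .inr ⟨-(s + 1), by rw [hj]; congr 1; ring, hi⟩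

theorem IsAltWalk.exists_isCycleSet_of_closed (h : IsAltWalk S I J) {a b : ℕ} (hab : a + 2 ≤ b)
    (hI : Set.InjOn I (Set.Ico a b)) (hJ : Set.InjOn J (Set.Ico a b)) (hclosed : I b = I a) :
    ∃ D ⊆ S, IsCycleSet D := by
  set k := b - a with hk
  have : NeZero k := ⟨by omega⟩
  have hmem (t : ZMod k) : a + t.val ∈ Set.Ico a b := ⟨by omega, by have := t.val_lt; omega⟩
  have hsucc (t : ZMod k) : I (a + (t + 1).val) = I (a + t.val + 1) := by
    have : Fact (1 < k) := ⟨by omega⟩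
    rw [ZMod.val_add, ZMod.val_one]
    rcases (Nat.succ_le_of_lt t.val_lt).lt_or_eq with hlt | heq
    · rw [Nat.mod_eq_of_lt hlt, add_assoc]
    · rw [show t.val + 1 = k from heq, Nat.mod_self, add_zero, ← hclosed]
      congr 1
      omega
  refine ⟨_, ?_, k, by omega, fun t => I (a + t.val), fun t => J (a + t.val), ?_, ?_, rfl⟩
  · rintro _ (⟨t, rfl⟩ | ⟨t, rfl⟩)
    · exact (h _).1
    · show (I (a + (t + 1).val), J (a + t.val)) ∈ S
      rw [hsucc]
      exact (h _).2
  · intro t t' htt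
    exact ZMod.val_injective k (by have := hI (hmem t) (hmem t') htt; omega)
  · intro t t' htt
    exact ZMod.val_injective k (by have := hJ (hmem t) (hmem t') htt; omega)

/-- A non-backtracking alternating walk closes up into a cycle at its first repeated vertex. -/
theorem IsAltWalk.exists_isCycleSet (h : IsAltWalk S I J) (hI : ∀ n, I (n + 1) ≠ I n)
    (hJ : ∀ n, J (n + 1) ≠ J n) : ∃ D ⊆ S, IsCycleSet D := by
  classical
  have hrep : ∃ n, ∃ a < n, I a = I n ∨ J a = J n := by
    obtain ⟨a, b, hab, heq⟩ := Finite.exists_ne_map_eq_of_infinite I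
    rcases hab.lt_or_gt with hab | hab
    exacts [⟨b, a, hab, .inl heq⟩, ⟨a, b, hab, .inl heq.symm⟩]
  obtain ⟨a, ha, hrep_a⟩ := Nat.find_spec hrep
  set n := Nat.find hrep
  have hfirst {b : ℕ} (hb : b < n) {a : ℕ} (hab : a < b) : I a ≠ I b ∧ J a ≠ J b := by
    simpa [not_or] using fun h => Nat.find_min hrep hb ⟨a, hab, h⟩
  have hIn : Set.InjOn I (Set.Iio n) :=
    Set.injOn_of_lt_imp_ne fun a _ _ hb hab => (hfirst hb hab).1
  have hJn : Set.InjOn J (Set.Iio n) :=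
    Set.injOn_of_lt_imp_ne fun a _ _ hb hab => (hfirst hb hab).2
  by_cases hA : ∃ a < n, I a = I n
  · obtain ⟨a, ha, hIa⟩ := hA
    have : a + 1 ≠ n := fun h1 => hI a (by rw [h1]; exact hIa.symm)
    exact h.exists_isCycleSet_of_closed (by omega) (hIn.mono Set.Ico_subset_Iio_self)
      (hJn.mono Set.Ico_subset_Iio_self) hIa.symm
  · -- The first repeat is a column: run the walk from `J a` with rows and columns exchanged.
    have hJa : J a = J n := hrep_a.resolve_left fun hIa => hA ⟨a, ha, hIa⟩
    have hIn' : Set.InjOn I (Set.Iic n) := by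
      rw [← Set.Iio_insert, Set.injOn_insert Set.self_notMem_Iio]
      exact ⟨hIn, fun ⟨b, hb, hIb⟩ => hA ⟨b, hb, hIb⟩⟩
    have : a + 1 ≠ n := fun h1 => hJ a (by rw [h1]; exact hJa.symm)
    obtain ⟨D, hDS, hD⟩ := h.swap.exists_isCycleSet_of_closed (by omega)
      (hJn.mono Set.Ico_subset_Iio_self)
      (hIn'.comp (Nat.succ_injective.injOn) fun m hm => Set.mem_Iic.2 hm.2)
      hJa.symm
    exact ⟨Prod.swap ⁻¹' D, fun p hp => hDS hp, hD.preimage_swap⟩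

end Walk

theorem IsCycleSet.nonempty {N1 N2 : ℕ} {D : Set (Fin N1 × Fin N2)} (h : IsCycleSet D) :
    D.Nonempty := by
  obtain ⟨k, -, σ, δ, -, -, rfl⟩ := h
  exact ⟨(σ 0, δ 0), .inl ⟨0, rfl⟩⟩

theorem exists_ne_ne_zero_of_sum_eq_zero {ι M : Type*} [Fintype ι] [AddCommMonoid M]
    {f : ι → M} (hf : ∑ i, f i = 0) {a : ι} (ha : f a ≠ 0) : ∃ b ≠ a, f b ≠ 0 := by
  by_contra! h
  exact ha (by rw [← hf, sum_eq_single a (fun b _ hb => h b hb) (by simp)])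

section Extraction

variable {N1 N2 : ℕ}

theorem exists_isAltWalk_entrySupport {R : Type*} [Semiring R] {w : Matrix (Fin N1) (Fin N2) R}
    (hw : w ∈ balanced R _ _) (hw0 : w ≠ 0) :
    ∃ I J, IsAltWalk w.entrySupport I J ∧ (∀ n, I (n + 1) ≠ I n) ∧ ∀ n, J (n + 1) ≠ J n := by
  have step (p : w.entrySupport) : ∃ q : w.entrySupport,
      q.1.1 ≠ p.1.1 ∧ q.1.2 ≠ p.1.2 ∧ (q.1.1, p.1.2) ∈ w.entrySupport := by
    obtain ⟨i, hi, hwi⟩ := exists_ne_ne_zero_of_sum_eq_zero (hw.2 p.1.2) p.2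
    obtain ⟨j, hj, hwj⟩ := exists_ne_ne_zero_of_sum_eq_zero (hw.1 i) hwi
    exact ⟨⟨(i, j), hwj⟩, hi, hj, hwi⟩
  choose F hF using step
  obtain ⟨i₀, j₀, h₀⟩ : ∃ i j, w i j ≠ 0 := by
    by_contra! h
    exact hw0 (Matrix.ext h)
  let q (n : ℕ) : w.entrySupport := F^[n] ⟨(i₀, j₀), h₀⟩
  have hq (n : ℕ) : q (n + 1) = F (q n) := Function.iterate_succ_apply' F n _
  refine ⟨fun n => (q n).1.1, fun n => (q n).1.2, fun n => ⟨(q n).2, ?_⟩, fun n => ?_, fun n => ?_⟩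
  · simpa only [hq] using (hF (q n)).2.2
  · simpa only [hq] using (hF (q n)).1
  · simpa only [hq] using (hF (q n)).2.1

theorem exists_isCycleSet_subset_entrySupport {R : Type*} [Semiring R]
    {w : Matrix (Fin N1) (Fin N2) R} (hw : w ∈ balanced R _ _) (hw0 : w ≠ 0) :
    ∃ D ⊆ w.entrySupport, IsCycleSet D := by
  obtain ⟨I, J, hW, hI, hJ⟩ := exists_isAltWalk_entrySupport hw hw0
  exact hW.exists_isCycleSet hI hJ

/-- Subtracting the right multiple of `z'` kills an entry on a cycle of `z'`, and a nonzero
remainder would contain a second cycle in `H`. -/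
theorem exists_eq_smul_of_subsingleton_cycles {K : Type*} [Field K] {H : Set (Fin N1 × Fin N2)}
    (hH : {D | D ⊆ H ∧ IsCycleSet D}.Subsingleton) {z z' : Matrix (Fin N1) (Fin N2) K}
    (hz : z ∈ balanced K _ _) (hz' : z' ∈ balanced K _ _) (hzH : z.entrySupport ⊆ H)
    (hz'H : z'.entrySupport ⊆ H) (hz'0 : z' ≠ 0) : ∃ c : K, z = c • z' := by
  obtain ⟨D, hDz', hD⟩ := exists_isCycleSet_subset_entrySupport hz' hz'0
  obtain ⟨e, he⟩ := hD.nonempty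
  have he' : z' e.1 e.2 ≠ 0 := hDz' he
  set c := z e.1 e.2 / z' e.1 e.2
  refine ⟨c, by_contra fun hne => ?_⟩
  obtain ⟨D', hD'r, hD'⟩ := exists_isCycleSet_subset_entrySupport
    (sub_mem hz (Submodule.smul_mem _ c hz')) (sub_ne_zero.2 hne)
  have hrH : (z - c • z').entrySupport ⊆ H := (entrySupport_sub_subset _ _).trans
    (Set.union_subset hzH ((entrySupport_smul_subset _ _).trans hz'H))
  have hD'D : D' = D := hH ⟨hD'r.trans hrH, hD'⟩ ⟨hDz'.trans hz'H, hD⟩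
  have := hD'r (hD'D ▸ he)
  simp [c, div_mul_cancel₀ _ he'] at this

end Extraction

section Convex

variable {𝕜 E : Type*} [Field 𝕜] [LinearOrder 𝕜] [IsStrictOrderedRing 𝕜] [AddCommGroup E]
  [Module 𝕜 E] {S : Set E} {x y : E}

theorem IsExtreme.exists_eq_smul_sub (h : IsExtreme 𝕜 S (segment 𝕜 x y)) {m w : E}
    (hm : m ∈ segment 𝕜 x y) (hadd : m + w ∈ S) (hsub : m - w ∈ S) : ∃ c : 𝕜, w = c • (y - x) := by
  have hmid : m ∈ openSegment 𝕜 (m + w) (m - w) :=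
    ⟨1 / 2, 1 / 2, by norm_num, by norm_num, by norm_num, by module⟩
  obtain ⟨a, -, ha⟩ := segment_eq_image' 𝕜 x y ▸ h.left_mem_of_mem_openSegment hadd hsub hm hmid
  obtain ⟨b, -, hb⟩ := segment_eq_image' 𝕜 x y ▸ h.right_mem_of_mem_openSegment hadd hsub hm hmid
  refine ⟨(a - b) / 2, ?_⟩
  have h2 : (2 : 𝕜) • w = (a - b) • (y - x) := by
    calc (2 : 𝕜) • w = (m + w) - (m - w) := by module
      _ = (a - b) • (y - x) := by rw [← ha, ← hb]; module
  linear_combination (norm := module) (1 / 2 : 𝕜) • h2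

theorem add_smul_sub_eq_of_mem_extremePoints (hx : x ∈ S.extremePoints 𝕜) (hy : y ∈ S) {c : 𝕜}
    (hc : c < 0) (hz : x + c • (y - x) ∈ S) : x + c • (y - x) = x := by
  refine hx.2 hz hy ?_
  rw [openSegment_eq_image']
  refine ⟨-c / (1 - c), ⟨div_pos (by linarith) (by linarith),
    (div_lt_one (by linarith)).2 (by linarith)⟩, ?_⟩
  have h0 : c + -c / (1 - c) * (1 - c) = 0 := by
    rw [div_mul_cancel₀ _ (by linarith : (0 : 𝕜) < 1 - c).ne']
    ring
  calc x + c • (y - x) + (-c / (1 - c)) • (y - (x + c • (y - x)))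
      = x + (c + -c / (1 - c) * (1 - c)) • (y - x) := by module
    _ = x := by rw [h0, zero_smul, add_zero]

theorem mem_segment_of_mem_extremePoints (hx : x ∈ S.extremePoints 𝕜)
    (hy : y ∈ S.extremePoints 𝕜) {c : 𝕜} (hz : x + c • (y - x) ∈ S) :
    x + c • (y - x) ∈ segment 𝕜 x y := by
  rcases lt_or_ge c 0 with hc | hc
  · rw [add_smul_sub_eq_of_mem_extremePoints hx hy.1 hc hz]
    exact left_mem_segment 𝕜 x y
  rcases le_or_gt c 1 with hc1 | hc1
  · rw [segment_eq_image']
    exact ⟨c, ⟨hc, hc1⟩, rfl⟩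
  · have hswap : x + c • (y - x) = y + (1 - c) • (x - y) := by module
    rw [hswap] at hz ⊢
    rw [add_smul_sub_eq_of_mem_extremePoints hy hx.1 (by linarith) hz]
    exact right_mem_segment 𝕜 x y

theorem isExtreme_segment_of_forall_mem_openSegment (hS : Convex 𝕜 S)
    (hx : x ∈ S.extremePoints 𝕜) (hy : y ∈ S.extremePoints 𝕜)
    (h : ∀ x₁ ∈ S, ∀ x₂ ∈ S, ∀ z ∈ segment 𝕜 x y, z ∈ openSegment 𝕜 x₁ x₂ →
      ∃ c : 𝕜, x₁ = x + c • (y - x)) :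
    IsExtreme 𝕜 S (segment 𝕜 x y) := by
  refine ⟨hS.segment_subset hx.1 hy.1, fun x₁ hx₁ x₂ hx₂ z hz hz₁₂ => ?_⟩
  obtain ⟨c, rfl⟩ := h x₁ hx₁ x₂ hx₂ z hz hz₁₂
  exact mem_segment_of_mem_extremePoints hx hy hx₁

end Convex

theorem exists_pos_forall_abs_mul_le {m n : Type*} [Finite m] [Finite n] {a w : Matrix m n ℝ}
    (ha : ∀ i j, 0 ≤ a i j) (hw : ∀ i j, w i j ≠ 0 → 0 < a i j) :
    ∃ ε > 0, ∀ i j, |ε * w i j| ≤ a i j := by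
  have hev (i : m) (j : n) : ∀ᶠ ε in nhds (0 : ℝ), |ε * w i j| ≤ a i j := by
    by_cases hij : w i j = 0
    · simp [hij, ha i j]
    · have hcont : Filter.Tendsto (fun ε : ℝ => |ε * w i j|) (nhds 0) (nhds 0) := by
        simpa using ((continuous_id.mul continuous_const).abs.tendsto (0 : ℝ))
      exact (hcont.eventually (gt_mem_nhds (hw i j hij))).mono fun _ => le_of_lt
  have hall := Filter.eventually_all.2 fun i => Filter.eventually_all.2 (hev i)
  have hall' : ∀ᶠ ε in nhdsWithin (0 : ℝ) (Set.Ioi 0), ∀ i j, |ε * w i j| ≤ a i j :=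
    nhdsWithin_le_nhds hall
  obtain ⟨ε, hε, hεpos⟩ := (hall'.and self_mem_nhdsWithin).exists
  exact ⟨ε, hεpos, hε⟩

section TransportationPolytope

variable {N1 N2 : ℕ} {u : Fin N1 → ℝ} {v : Fin N2 → ℝ} {x y y' : Matrix (Fin N1) (Fin N2) ℝ}

theorem sub_mem_balanced_of_mem_TP (hx : x ∈ TP N1 N2 u v) (hy : y ∈ TP N1 N2 u v) :
    x - y ∈ balanced ℝ (Fin N1) (Fin N2) :=
  ⟨fun i => by simp [sum_sub_distrib, hx.2.1, hy.2.1],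
    fun j => by simp [sum_sub_distrib, hx.2.2, hy.2.2]⟩

theorem add_mem_TP (hx : x ∈ TP N1 N2 u v) {w : Matrix (Fin N1) (Fin N2) ℝ}
    (hw : w ∈ balanced ℝ (Fin N1) (Fin N2)) (hxw : ∀ i j, 0 ≤ x i j + w i j) :
    x + w ∈ TP N1 N2 u v :=
  ⟨hxw, fun i => by simp [sum_add_distrib, hx.2.1, hw.1],
    fun j => by simp [sum_add_distrib, hx.2.2, hw.2]⟩

theorem convex_TP : Convex ℝ (TP N1 N2 u v) := by
  intro x hx z hz a b ha hb hab
  have : a • x + b • z = x + b • (z - x) := by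
    rw [eq_sub_of_add_eq hab]; module
  rw [this]
  refine add_mem_TP hx (Submodule.smul_mem _ b (sub_mem_balanced_of_mem_TP hz hx)) fun i j => ?_
  have := hx.1 i j
  have := hz.1 i j
  simp only [Matrix.smul_apply, Matrix.sub_apply, smul_eq_mul]
  nlinarith

theorem exists_add_sub_smul_mem_TP (hx : x ∈ TP N1 N2 u v) {w : Matrix (Fin N1) (Fin N2) ℝ}
    (hw : w ∈ balanced ℝ (Fin N1) (Fin N2)) (hwx : ∀ i j, w i j ≠ 0 → 0 < x i j) :
    ∃ ε : ℝ, 0 < ε ∧ x + ε • w ∈ TP N1 N2 u v ∧ x - ε • w ∈ TP N1 N2 u v := by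
  obtain ⟨ε, hε, hle⟩ := exists_pos_forall_abs_mul_le hx.1 hwx
  refine ⟨ε, hε, add_mem_TP hx (Submodule.smul_mem _ ε hw) fun i j => ?_, ?_⟩
  · simpa using neg_le_iff_add_nonneg'.1 (neg_le_of_abs_le (hle i j))
  · rw [sub_eq_add_neg, ← neg_smul]
    refine add_mem_TP hx (Submodule.smul_mem _ (-ε) hw) fun i j => ?_
    simpa [neg_mul, ← sub_eq_add_neg] using le_of_abs_le (hle i j)

/-- Moving from the midpoint of `[y, y']` along a cycle of `y ∪ y'` stays in the polytope, so on
a face `[y, y']` the signed cycle vector is parallel to `y' - y`. -/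
theorem IsCycleSet.eq_entrySupport_sub_of_isExtreme (hy : y ∈ TP N1 N2 u v)
    (hy' : y' ∈ TP N1 N2 u v) (hext : IsExtreme ℝ (TP N1 N2 u v) (segment ℝ y y'))
    {D : Set (Fin N1 × Fin N2)} (hD : IsCycleSet D)
    (hDH : D ⊆ y.entrySupport ∪ y'.entrySupport) : D = (y' - y).entrySupport := by
  obtain ⟨k, hk, σ, δ, hσ, hδ, rfl⟩ := hD
  have : NeZero k := ⟨by omega⟩
  set w := cycleMatrix ℝ σ δ
  have hw : w.entrySupport = _ := entrySupport_cycleMatrix hk hσ hδ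
  set m := (1 / 2 : ℝ) • y + (1 / 2 : ℝ) • y'
  have hm : m ∈ segment ℝ y y' := ⟨1 / 2, 1 / 2, by norm_num, by norm_num, by norm_num, rfl⟩
  have hwm (i : Fin N1) (j : Fin N2) (hij : w i j ≠ 0) : 0 < m i j := by
    have hyij := hy.1 i j
    have hy'ij := hy'.1 i j
    have hij' : (i, j) ∈ w.entrySupport := hij
    rw [hw] at hij'
    have hpos : y i j ≠ 0 ∨ y' i j ≠ 0 := hDH hij'
    simp only [m, Matrix.add_apply, Matrix.smul_apply, smul_eq_mul]
    rcases hpos with h | h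
    · have := lt_of_le_of_ne hyij (Ne.symm h); linarith
    · have := lt_of_le_of_ne hy'ij (Ne.symm h); linarith
  obtain ⟨ε, hε, hadd, hsub⟩ :=
    exists_add_sub_smul_mem_TP (convex_TP.segment_subset hy hy' hm) cycleMatrix_mem_balanced hwm
  obtain ⟨c, hc⟩ := hext.exists_eq_smul_sub hm hadd hsub
  have hc0 : c ≠ 0 := by
    rintro rfl
    have h0 : (σ 0, δ 0) ∈ w.entrySupport := hw ▸ .inl ⟨0, rfl⟩
    rw [← entrySupport_smul hε.ne' w, hc, zero_smul] at h0
    exact h0 rfl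
  rw [← hw, ← entrySupport_smul hε.ne' w, hc, entrySupport_smul hc0]

theorem exists_eq_add_smul_sub_of_mem_openSegment (hy : y ∈ TP N1 N2 u v)
    (hy' : y' ∈ TP N1 N2 u v) (hne : y ≠ y')
    (huniq : {D | D ⊆ y.entrySupport ∪ y'.entrySupport ∧ IsCycleSet D}.Subsingleton)
    {x₁ x₂ : Matrix (Fin N1) (Fin N2) ℝ} (hx₁ : x₁ ∈ TP N1 N2 u v) (hx₂ : x₂ ∈ TP N1 N2 u v)
    (hx : x ∈ segment ℝ y y') (hx₁₂ : x ∈ openSegment ℝ x₁ x₂) :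
    ∃ c : ℝ, x₁ = y + c • (y' - y) := by
  have hx₁H : x₁.entrySupport ⊆ y.entrySupport ∪ y'.entrySupport :=
    (entrySupport_subset_of_mem_openSegment hx₁.1 hx₂.1 hx₁₂).trans
      (entrySupport_subset_of_mem_segment hx)
  obtain ⟨c, hc⟩ := exists_eq_smul_of_subsingleton_cycles huniq
    (sub_mem_balanced_of_mem_TP hx₁ hy) (sub_mem_balanced_of_mem_TP hy' hy)
    ((entrySupport_sub_subset _ _).trans (Set.union_subset hx₁H Set.subset_union_left))
    ((entrySupport_sub_subset _ _).trans (Set.union_comm _ _).subset) (sub_ne_zero.2 hne.symm)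
  exact ⟨c, by rw [← hc, add_sub_cancel]⟩

end TransportationPolytope

theorem adjacency_iff_unique_cycle_general (N1 N2 : ℕ)
    (u : Fin N1 → ℝ) (v : Fin N2 → ℝ)
    (y y' : Matrix (Fin N1) (Fin N2) ℝ)
    (hy : y ∈ Set.extremePoints ℝ (TP N1 N2 u v))
    (hy' : y' ∈ Set.extremePoints ℝ (TP N1 N2 u v))
    (hne : y ≠ y') :
    IsExtreme ℝ (TP N1 N2 u v) (segment ℝ y y') ↔
      ∃! D : Set (Fin N1 × Fin N2), D ⊆ suppSet y ∪ suppSet y' ∧ IsCycleSet D := by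
  rw [suppSet_eq_entrySupport hy.1.1, suppSet_eq_entrySupport hy'.1.1]
  constructor
  · intro hext
    have hcycle (D : Set (Fin N1 × Fin N2))
        (hD : D ⊆ y.entrySupport ∪ y'.entrySupport ∧ IsCycleSet D) : D = (y' - y).entrySupport :=
      hD.2.eq_entrySupport_sub_of_isExtreme hy.1 hy'.1 hext hD.1
    obtain ⟨D, hDsub, hD⟩ := exists_isCycleSet_subset_entrySupport
      (sub_mem_balanced_of_mem_TP hy'.1 hy.1) (sub_ne_zero.2 hne.symm)
    have hDH := hDsub.trans ((entrySupport_sub_subset _ _).trans (Set.union_comm _ _).subset)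
    exact ⟨D, ⟨hDH, hD⟩, fun D' hD' => (hcycle D' hD').trans (hcycle D ⟨hDH, hD⟩).symm⟩
  · intro huniq
    exact isExtreme_segment_of_forall_mem_openSegment convex_TP hy hy'
      fun x₁ hx₁ x₂ hx₂ x hx hx₁₂ => exists_eq_add_smul_sub_of_mem_openSegment hy.1 hy'.1 hne
        (fun D hD D' hD' => huniq.unique hD hD') hx₁ hx₂ hx hx₁₂

theorem adjacency_iff_unique_cycle (N1 N2 : ℕ) (hN1 : 0 < N1) (hN2 : 0 < N2)
    (u : Fin N1 → ℝ) (v : Fin N2 → ℝ)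
    (hu : ∀ i, 0 < u i) (hv : ∀ j, 0 < v j)
    (huv : ∑ i, u i = ∑ j, v j)
    (hnd : Nondeg N1 N2 u v)
    (y y' : Matrix (Fin N1) (Fin N2) ℝ)
    (hy : y ∈ Set.extremePoints ℝ (TP N1 N2 u v))
    (hy' : y' ∈ Set.extremePoints ℝ (TP N1 N2 u v))
    (hne : y ≠ y') :
    IsExtreme ℝ (TP N1 N2 u v) (segment ℝ y y') ↔
      ∃! D : Set (Fin N1 × Fin N2), D ⊆ suppSet y ∪ suppSet y' ∧ IsCycleSet D :=
  adjacency_iff_unique_cycle_general N1 N2 u v y y' hy hy' hne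
end

section
/- The transportation polytope TP(u,v) is non-degenerate (i.e., every vertex of TP(u,v) has exactly N1+N2−1 nonzero entries) if and only if there are no nonempty proper subsets I ⊊ {1,…,N1} and J ⊊ {1,…,N2} with ∑_{i∈I} u_i = ∑_{j∈J} v_j. -/
open scoped BigOperators

/-!
At a vertex `y` of `TP(u,v)` no nonzero matrix supported in `supp y` has zero row and column
sums (otherwise `y` is the midpoint of two points of `TP(u,v)`), so `#supp y` is at most the
dimension of any subspace containing the row and column sums of such matrices. These sums
always satisfy `∑ a = ∑ b`, whence `#supp y ≤ N1 + N2 - 1`.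

If `∑_I u = ∑_J v`, the matrices of `TP(u,v)` supported in `I × J ∪ Iᶜ × Jᶜ` form a nonempty
compact face (it contains a sum of two product couplings). By Krein–Milman it has a vertex,
which is a vertex of `TP(u,v)`; its row and column sums satisfy two independent relations, so
its support has at most `N1 + N2 - 2` elements.

Conversely, if `#supp y ≤ N1 + N2 - 2`, the system `a i + b j = 0` for `(i, j) ∈ supp y` has a
solution that is not a multiple of `(1, -1)`. The zero sets `I` of `a` and `J` of `b` make every
nonzero entry of `y` lie in `I × J` or in `Iᶜ × Jᶜ`, hence `∑_I u = ∑_J v`.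
-/

open Finset Module LinearMap Filter Topology

namespace TransportationPolytope

section LinearAlgebra

variable {m n : Type*}

def partialSumDiff (I : Finset m) (J : Finset n) : (m → ℝ) × (n → ℝ) →ₗ[ℝ] ℝ where
  toFun w := ∑ i ∈ I, w.1 i - ∑ j ∈ J, w.2 j
  map_add' w w' := by simp only [Prod.fst_add, Prod.snd_add, Pi.add_apply, sum_add_distrib]; ring
  map_smul' c w := by simp [mul_sum, mul_sub]

@[simp]
lemma partialSumDiff_apply (I : Finset m) (J : Finset n) (w : (m → ℝ) × (n → ℝ)) :
    partialSumDiff I J w = ∑ i ∈ I, w.1 i - ∑ j ∈ J, w.2 j := rfl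

variable [Fintype m] [Fintype n]

def rowColSums : Matrix m n ℝ →ₗ[ℝ] (m → ℝ) × (n → ℝ) where
  toFun y := (fun i => ∑ j, y i j, fun j => ∑ i, y i j)
  map_add' y z := by ext <;> simp [sum_add_distrib]
  map_smul' c y := by ext <;> simp [mul_sum]

@[simp]
lemma rowColSums_apply (y : Matrix m n ℝ) :
    rowColSums y = (fun i => ∑ j, y i j, fun j => ∑ i, y i j) := rfl

lemma sum_rows_eq_sum_cols_of_block {I : Finset m} {J : Finset n} {z : Matrix m n ℝ}
    (hz : ∀ i j, z i j ≠ 0 → (i ∈ I ↔ j ∈ J)) :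
    ∑ i ∈ I, ∑ j, z i j = ∑ j ∈ J, ∑ i, z i j := by
  have hrow : ∀ i ∈ I, ∑ j, z i j = ∑ j ∈ J, z i j := fun i hi =>
    (sum_subset (subset_univ J) fun j _ hj => by_contra fun h => hj ((hz i j h).1 hi)).symm
  have hcol : ∀ j ∈ J, ∑ i, z i j = ∑ i ∈ I, z i j := fun j hj =>
    (sum_subset (subset_univ I) fun i _ hi => by_contra fun h => hi ((hz i j h).2 hj)).symm
  rw [sum_congr rfl hrow, sum_congr rfl hcol, sum_comm]

lemma rowColSums_mem_ker_partialSumDiff {I : Finset m} {J : Finset n} {z : Matrix m n ℝ}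
    (hz : ∀ i j, z i j ≠ 0 → (i ∈ I ↔ j ∈ J)) :
    rowColSums z ∈ ker (partialSumDiff I J) := by
  simp [sum_rows_eq_sum_cols_of_block hz]

lemma finrank_ker_add_finrank_of_surjective {V W : Type*} [AddCommGroup V] [Module ℝ V]
    [FiniteDimensional ℝ V] [AddCommGroup W] [Module ℝ W] {f : V →ₗ[ℝ] W}
    (hf : Function.Surjective f) : finrank ℝ (ker f) + finrank ℝ W = finrank ℝ V := by
  rw [← f.finrank_range_add_finrank_ker, range_eq_top.2 hf, finrank_top, add_comm]

lemma finrank_ker_partialSumDiff {I : Finset m} (J : Finset n) (hI : I.Nonempty) :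
    finrank ℝ (ker (partialSumDiff I J)) + 1 = Fintype.card m + Fintype.card n := by
  classical
  obtain ⟨i, hi⟩ := hI
  have hsurj : Function.Surjective (partialSumDiff I J) := fun r =>
    ⟨(Pi.single i r, 0), by simp [Pi.single_apply, hi]⟩
  simpa using finrank_ker_add_finrank_of_surjective hsurj

lemma rowColSums_mem_ker_partialSumDiff_prod [DecidableEq m] [DecidableEq n] {I : Finset m}
    {J : Finset n} {z : Matrix m n ℝ} (hz : ∀ i j, z i j ≠ 0 → (i ∈ I ↔ j ∈ J)) :
    rowColSums z ∈ ker ((partialSumDiff I J).prod (partialSumDiff Iᶜ Jᶜ)) := by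
  rw [LinearMap.ker_prod]
  refine ⟨rowColSums_mem_ker_partialSumDiff hz, rowColSums_mem_ker_partialSumDiff fun i j h => ?_⟩
  simpa [not_iff_not] using hz i j h

lemma finrank_ker_partialSumDiff_prod [DecidableEq m] [DecidableEq n] {I : Finset m}
    (J : Finset n) (hI : I.Nonempty) (hIu : I ≠ univ) :
    finrank ℝ (ker ((partialSumDiff I J).prod (partialSumDiff Iᶜ Jᶜ))) + 2 =
      Fintype.card m + Fintype.card n := by
  obtain ⟨i, hi⟩ := hI
  obtain ⟨i', -, hi'⟩ := exists_of_ssubset (ssubset_univ_iff.2 hIu)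
  have hsurj : Function.Surjective ((partialSumDiff I J).prod (partialSumDiff Iᶜ Jᶜ)) := by
    rintro ⟨r, s⟩
    refine ⟨(Pi.single i r, 0) + (Pi.single i' s, 0), ?_⟩
    simp [Pi.single_apply, sum_add_distrib, hi, hi']
  simpa using finrank_ker_add_finrank_of_surjective hsurj

lemma exists_block_of_ncard_add_one_lt [Nonempty m] {S : Set (m × n)}
    (hS : ∀ j, ∃ i, (i, j) ∈ S) (hcard : S.ncard + 1 < Fintype.card m + Fintype.card n) :
    ∃ (I : Finset m) (J : Finset n), I.Nonempty ∧ I ≠ univ ∧ ∀ p ∈ S, (p.1 ∈ I ↔ p.2 ∈ J) := by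
  classical
  obtain ⟨i₀⟩ := ‹Nonempty m›
  -- `ψ w = 0` has more unknowns than equations; `w.1 i₀ = 0` excludes the solutions `c • (1, -1)`
  let ψ : (m → ℝ) × (n → ℝ) →ₗ[ℝ] (S → ℝ) × ℝ :=
    { toFun w := (fun p => w.1 p.1.1 + w.2 p.1.2, w.1 i₀)
      map_add' w w' := by ext <;> simp only [Prod.fst_add, Prod.snd_add, Pi.add_apply]; ring
      map_smul' c w := by ext <;> simp [mul_add] }
  have hker : ker ψ ≠ ⊥ := ker_ne_bot_of_finrank_lt <| by
    rw [Set.ncard_eq_toFinset_card', Set.toFinset_card] at hcard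
    simpa using hcard
  obtain ⟨w, hw, hw0⟩ := (Submodule.ne_bot_iff _).1 hker
  simp only [LinearMap.mem_ker, ψ, coe_mk, AddHom.coe_mk, Prod.mk_eq_zero, funext_iff,
    Pi.zero_apply, Subtype.forall] at hw
  obtain ⟨hS0, hi₀⟩ := hw
  obtain ⟨i₁, hi₁⟩ : ∃ i₁, w.1 i₁ ≠ 0 := by
    by_contra! h
    refine hw0 (Prod.ext (funext h) (funext fun j => ?_))
    obtain ⟨i, hi⟩ := hS j
    simpa [h i] using hS0 (i, j) hi
  refine ⟨univ.filter (w.1 · = 0), univ.filter (w.2 · = 0), ⟨i₀, by simpa using hi₀⟩,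
    fun h => hi₁ (filter_eq_self.1 h i₁ (mem_univ _)), fun p hp => ?_⟩
  have := hS0 p hp
  simp only [mem_filter, mem_univ, true_and]
  constructor <;> intro <;> linarith

end LinearAlgebra

section Convexity

variable {m n : Type*}

instance : LocallyConvexSpace ℝ (Matrix m n ℝ) :=
  inferInstanceAs (LocallyConvexSpace ℝ (m → n → ℝ))

lemma eq_zero_of_add_mem_of_sub_mem {E : Type*} [AddCommGroup E] [Module ℝ E] {A : Set E}
    {x w : E} (hx : x ∈ A.extremePoints ℝ) (hadd : x + w ∈ A) (hsub : x - w ∈ A) : w = 0 :=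
  add_eq_left.1 (hx.2 hadd hsub (mem_openSegment_add_sub x w))

lemma isExtreme_sep_support_subset {C : Set (Matrix m n ℝ)} (hC : ∀ y ∈ C, ∀ i j, 0 ≤ y i j)
    (P : m → n → Prop) : IsExtreme ℝ C {y ∈ C | ∀ i j, y i j ≠ 0 → P i j} := by
  refine ⟨Set.sep_subset _ _, ?_⟩
  rintro y₁ hy₁ y₂ hy₂ y ⟨-, hy⟩ ⟨a, b, ha, hb, -, rfl⟩
  refine ⟨hy₁, fun i j h₁ => by_contra fun hP => h₁ ?_⟩
  have h := not_imp_comm.1 (hy i j) hP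
  simp only [Matrix.add_apply, Matrix.smul_apply, smul_eq_mul] at h
  nlinarith [hC y₁ hy₁ i j, hC y₂ hy₂ i j]

lemma isClosed_setOf_support_subset (P : m → n → Prop) :
    IsClosed {y : Matrix m n ℝ | ∀ i j, y i j ≠ 0 → P i j} := by
  have : {y : Matrix m n ℝ | ∀ i j, y i j ≠ 0 → P i j} =
      ⋂ (i) (j) (_ : ¬P i j), {y | y i j = 0} := by
    ext y
    simp [not_imp_comm]
  rw [this]
  exact isClosed_iInter fun i => isClosed_iInter fun j => isClosed_iInter fun _ =>
    isClosed_eq (continuous_id.matrix_elem i j) continuous_const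

lemma IsCompact.exists_mem_extremePoints_support_subset {C : Set (Matrix m n ℝ)}
    (hCc : IsCompact C) (hC : ∀ y ∈ C, ∀ i j, 0 ≤ y i j) {P : m → n → Prop}
    (hP : ∃ y ∈ C, ∀ i j, y i j ≠ 0 → P i j) :
    ∃ y ∈ C.extremePoints ℝ, ∀ i j, y i j ≠ 0 → P i j := by
  obtain ⟨y, hy⟩ := (hCc.inter_right (isClosed_setOf_support_subset P)).extremePoints_nonempty hP
  exact ⟨y, (isExtreme_sep_support_subset hC P).extremePoints_subset_extremePoints hy, hy.1.2⟩

end Convexity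

section TP

variable {N1 N2 : ℕ} {u a a' : Fin N1 → ℝ} {v b b' : Fin N2 → ℝ}
  {y z : Matrix (Fin N1) (Fin N2) ℝ}

lemma mem_TP_iff : y ∈ TP N1 N2 u v ↔ (∀ i j, 0 ≤ y i j) ∧ rowColSums y = (u, v) := by
  simp [TP, Prod.ext_iff, funext_iff]

lemma isCompact_TP : IsCompact (TP N1 N2 u v) := by
  have hclosed : IsClosed (TP N1 N2 u v) := by
    have : TP N1 N2 u v =
        (⋂ (i) (j), {y | 0 ≤ y i j}) ∩ rowColSums ⁻¹' {(u, v)} := by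
      ext y
      simp [mem_TP_iff]
    rw [this]
    exact (isClosed_iInter fun i => isClosed_iInter fun j =>
      isClosed_le continuous_const (continuous_id.matrix_elem i j)).inter
      (isClosed_singleton.preimage rowColSums.continuous_of_finiteDimensional)
  refine (isCompact_univ_pi fun i => isCompact_univ_pi fun _ => isCompact_Icc (a := 0) (b := u i))
    |>.of_isClosed_subset hclosed fun y hy i _ j _ => ⟨hy.1 i j, ?_⟩
  rw [← hy.2.1 i]
  exact single_le_sum (fun j _ => hy.1 i j) (mem_univ j)

lemma add_mem_TP (hy : y ∈ TP N1 N2 a b) (hz : z ∈ TP N1 N2 a' b') :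
    y + z ∈ TP N1 N2 (a + a') (b + b') := by
  rw [mem_TP_iff] at *
  exact ⟨fun i j => add_nonneg (hy.1 i j) (hz.1 i j), by rw [map_add, hy.2, hz.2]; rfl⟩

lemma eventually_add_smul_mem_TP (hy : y ∈ TP N1 N2 u v) (hz : ∀ i j, y i j = 0 → z i j = 0)
    (hz0 : rowColSums z = 0) : ∀ᶠ t in 𝓝 (0 : ℝ), y + t • z ∈ TP N1 N2 u v := by
  rw [mem_TP_iff] at hy
  have hentry : ∀ i j, ∀ᶠ t in 𝓝 (0 : ℝ), 0 ≤ y i j + t * z i j := fun i j => by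
    rcases (hy.1 i j).eq_or_lt with h | h
    · exact .of_forall fun t => by simp [← h, hz i j h.symm]
    · have hc : Continuous fun t : ℝ => y i j + t * z i j := by fun_prop
      exact (hc.tendsto' 0 _ (by simp)).eventually (eventually_ge_nhds h)
  filter_upwards [eventually_all.2 fun i => eventually_all.2 (hentry i)] with t ht
  rw [mem_TP_iff]
  exact ⟨ht, by rw [map_add, map_smul, hz0, hy.2, smul_zero, add_zero]⟩

lemma eq_zero_of_mem_extremePoints_TP (hy : y ∈ (TP N1 N2 u v).extremePoints ℝ)
    (hz : ∀ i j, y i j = 0 → z i j = 0) (hz0 : rowColSums z = 0) : z = 0 := by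
  have hneg : Tendsto (fun t : ℝ => -t) (𝓝 0) (𝓝 0) := by simpa using tendsto_neg (0 : ℝ)
  have h := eventually_add_smul_mem_TP hy.1 hz hz0
  obtain ⟨t, ⟨hadd, hsub⟩, ht⟩ :=
    ((h.and (hneg.eventually h)).filter_mono nhdsWithin_le_nhds).and self_mem_nhdsWithin
      |>.exists (f := 𝓝[≠] (0 : ℝ))
  rw [neg_smul, ← sub_eq_add_neg] at hsub
  exact (smul_eq_zero.1 (eq_zero_of_add_mem_of_sub_mem hy hadd hsub)).resolve_left ht

lemma ncard_support_le_finrank (hy : y ∈ (TP N1 N2 u v).extremePoints ℝ)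
    (K : Submodule ℝ ((Fin N1 → ℝ) × (Fin N2 → ℝ)))
    (hK : ∀ z : Matrix (Fin N1) (Fin N2) ℝ, (∀ i j, y i j = 0 → z i j = 0) → rowColSums z ∈ K) :
    {p : Fin N1 × Fin N2 | y p.1 p.2 ≠ 0}.ncard ≤ finrank ℝ K := by
  classical
  set S := {p : Fin N1 × Fin N2 | y p.1 p.2 ≠ 0}
  let e : S → Matrix (Fin N1) (Fin N2) ℝ := fun p => Matrix.stdBasis ℝ _ _ p
  have hsupp : ∀ z ∈ Submodule.span ℝ (Set.range e), ∀ i j, y i j = 0 → z i j = 0 := by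
    intro z hz
    induction hz using Submodule.span_induction with
    | mem _ hz =>
      obtain ⟨⟨⟨i', j'⟩, hp⟩, rfl⟩ := hz
      intro i j hij
      have : ¬(i' = i ∧ j' = j) := by rintro ⟨rfl, rfl⟩; exact hp hij
      simp [e, Matrix.stdBasis_eq_single, this]
    | zero => simp
    | add _ _ _ _ h₁ h₂ => intro i j hij; simp [h₁ i j hij, h₂ i j hij]
    | smul _ _ _ h => intro i j hij; simp [h i j hij]
  have hli : LinearIndependent ℝ (rowColSums ∘ e) :=
    ((Matrix.stdBasis ℝ _ _).linearIndependent.comp _ Subtype.val_injective).map <|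
      Submodule.disjoint_def.2 fun z hz hz0 => eq_zero_of_mem_extremePoints_TP hy (hsupp z hz) hz0
  calc S.ncard = finrank ℝ (Submodule.span ℝ (Set.range (rowColSums ∘ e))) := by
        rw [finrank_span_eq_card hli, Set.ncard_eq_toFinset_card', Set.toFinset_card]
    _ ≤ finrank ℝ K := Submodule.finrank_mono <| Submodule.span_le.2 <| by
        rintro _ ⟨p, rfl⟩
        exact hK _ (hsupp _ (Submodule.subset_span ⟨p, rfl⟩))

lemma smul_vecMulVec_mem_TP (ha : ∀ i, 0 ≤ a i) (hb : ∀ j, 0 ≤ b j)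
    (hab : ∑ i, a i = ∑ j, b j) (h0 : ∑ i, a i ≠ 0) :
    (∑ i, a i)⁻¹ • Matrix.vecMulVec a b ∈ TP N1 N2 a b := by
  refine mem_TP_iff.2 ⟨fun i j => ?_, ?_⟩
  · have := sum_nonneg fun i (_ : i ∈ univ) => ha i
    simp only [Matrix.smul_apply, Matrix.vecMulVec_apply, smul_eq_mul]
    exact mul_nonneg (inv_nonneg.2 this) (mul_nonneg (ha i) (hb j))
  · ext i
    · simp [Matrix.vecMulVec_apply, ← mul_sum, ← hab]
      field_simp
    · simp [Matrix.vecMulVec_apply, ← sum_mul, ← mul_sum]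
      field_simp

lemma smul_vecMulVec_indicator_mem_TP (hu : ∀ i, 0 < u i) (hv : ∀ j, 0 ≤ v j)
    {I : Finset (Fin N1)} {J : Finset (Fin N2)} (hI : I.Nonempty)
    (hIJ : ∑ i ∈ I, u i = ∑ j ∈ J, v j) :
    (∑ i ∈ I, u i)⁻¹ • Matrix.vecMulVec ((I : Set (Fin N1)).indicator u)
      ((J : Set (Fin N2)).indicator v) ∈
      TP N1 N2 ((I : Set (Fin N1)).indicator u) ((J : Set (Fin N2)).indicator v) := by
  have := smul_vecMulVec_mem_TP (N1 := N1) (N2 := N2)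
    (a := (I : Set (Fin N1)).indicator u) (b := (J : Set (Fin N2)).indicator v)
    (Set.indicator_nonneg fun i _ => (hu i).le) (Set.indicator_nonneg fun j _ => hv j)
  rw [sum_indicator_subset _ (subset_univ I), sum_indicator_subset _ (subset_univ J)] at this
  exact this hIJ (sum_pos (fun i _ => hu i) hI).ne'

lemma exists_mem_TP_block (hu : ∀ i, 0 < u i) (hv : ∀ j, 0 < v j) (huv : ∑ i, u i = ∑ j, v j)
    {I : Finset (Fin N1)} {J : Finset (Fin N2)} (hI : I.Nonempty) (hIu : I ≠ univ)
    (hIJ : ∑ i ∈ I, u i = ∑ j ∈ J, v j) :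
    ∃ y ∈ TP N1 N2 u v, ∀ i j, y i j ≠ 0 → (i ∈ I ↔ j ∈ J) := by
  let P (I' : Finset (Fin N1)) (J' : Finset (Fin N2)) : Matrix (Fin N1) (Fin N2) ℝ :=
    (∑ i ∈ I', u i)⁻¹ •
      Matrix.vecMulVec ((I' : Set (Fin N1)).indicator u) ((J' : Set (Fin N2)).indicator v)
  have hPsupp : ∀ I' J' i j, P I' J' i j ≠ 0 → i ∈ I' ∧ j ∈ J' := by
    intro I' J' i j h
    by_contra hij
    simp only [Matrix.smul_apply, Matrix.vecMulVec_apply, Set.indicator_apply, mem_coe,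
      smul_eq_mul, P] at h
    grind
  have hIc : ∑ i ∈ Iᶜ, u i = ∑ j ∈ Jᶜ, v j := by
    linarith [sum_add_sum_compl I u, sum_add_sum_compl J v]
  have hIc_ne : Iᶜ.Nonempty := nonempty_iff_ne_empty.2 (by simpa using hIu)
  refine ⟨P I J + P Iᶜ Jᶜ, ?_, fun i j h => ?_⟩
  · have hu' : (I : Set (Fin N1)).indicator u + (↑Iᶜ : Set (Fin N1)).indicator u = u := by
      rw [coe_compl, Set.indicator_self_add_compl]
    have hv' : (J : Set (Fin N2)).indicator v + (↑Jᶜ : Set (Fin N2)).indicator v = v := by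
      rw [coe_compl, Set.indicator_self_add_compl]
    rw [← hu', ← hv']
    exact add_mem_TP (smul_vecMulVec_indicator_mem_TP hu (fun j => (hv j).le) hI hIJ)
      (smul_vecMulVec_indicator_mem_TP hu (fun j => (hv j).le) hIc_ne hIc)
  · by_cases h₁ : P I J i j = 0
    · obtain ⟨hi, hj⟩ := hPsupp Iᶜ Jᶜ i j (by simpa [h₁] using h)
      exact iff_of_false (mem_compl.1 hi) (mem_compl.1 hj)
    · exact iff_of_true (hPsupp I J i j h₁).1 (hPsupp I J i j h₁).2

lemma sum_eq_sum_of_block {I : Finset (Fin N1)} {J : Finset (Fin N2)} (hy : y ∈ TP N1 N2 u v)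
    (hIJ : ∀ i j, y i j ≠ 0 → (i ∈ I ↔ j ∈ J)) : ∑ i ∈ I, u i = ∑ j ∈ J, v j := by
  obtain ⟨-, hrow, hcol⟩ := hy
  simpa [hrow, hcol] using sum_rows_eq_sum_cols_of_block hIJ

lemma exists_partialSums_eq_of_ncard_support_add_one_lt (hN1 : 0 < N1) (hu : ∀ i, 0 < u i)
    (hv : ∀ j, 0 < v j) (hy : y ∈ TP N1 N2 u v)
    (hcard : {p : Fin N1 × Fin N2 | y p.1 p.2 ≠ 0}.ncard + 1 < N1 + N2) :
    ∃ (I : Finset (Fin N1)) (J : Finset (Fin N2)),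
      I.Nonempty ∧ I ≠ univ ∧ J.Nonempty ∧ J ≠ univ ∧ ∑ i ∈ I, u i = ∑ j ∈ J, v j := by
  have hrow : ∀ i, ∃ j, y i j ≠ 0 := fun i => by
    simpa using exists_ne_zero_of_sum_ne_zero ((hy.2.1 i).trans_ne (hu i).ne')
  have hcol : ∀ j, ∃ i, y i j ≠ 0 := fun j => by
    simpa using exists_ne_zero_of_sum_ne_zero ((hy.2.2 j).trans_ne (hv j).ne')
  have : Nonempty (Fin N1) := Fin.pos_iff_nonempty.1 hN1
  obtain ⟨I, J, ⟨i₀, hi₀⟩, hIu, hIJ⟩ :=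
    exists_block_of_ncard_add_one_lt (S := {p : Fin N1 × Fin N2 | y p.1 p.2 ≠ 0}) hcol
      (by simpa using hcard)
  have hblock : ∀ i j, y i j ≠ 0 → (i ∈ I ↔ j ∈ J) := fun i j h => hIJ (i, j) h
  obtain ⟨i₁, -, hi₁⟩ := exists_of_ssubset (ssubset_univ_iff.2 hIu)
  obtain ⟨j₀, hj₀⟩ := hrow i₀
  obtain ⟨j₁, hj₁⟩ := hrow i₁
  exact ⟨I, J, ⟨i₀, hi₀⟩, hIu, ⟨j₀, (hblock _ _ hj₀).1 hi₀⟩,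
    fun h => hi₁ ((hblock _ _ hj₁).2 (h ▸ mem_univ j₁)), sum_eq_sum_of_block hy hblock⟩

end TP

end TransportationPolytope

open TransportationPolytope in
theorem nondegenerate_iff_no_equal_partial_sums_general (N1 N2 : ℕ) (hN1 : 0 < N1)
    (u : Fin N1 → ℝ) (v : Fin N2 → ℝ)
    (hu : ∀ i, 0 < u i) (hv : ∀ j, 0 < v j)
    (huv : ∑ i, u i = ∑ j, v j) :
    Nondeg N1 N2 u v ↔
      ¬ ∃ (I : Finset (Fin N1)) (J : Finset (Fin N2)),
          I.Nonempty ∧ I ≠ Finset.univ ∧ J.Nonempty ∧ J ≠ Finset.univ ∧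
          ∑ i ∈ I, u i = ∑ j ∈ J, v j := by
  constructor
  · rintro hnd ⟨I, J, hI, hIu, -, -, hIJ⟩
    obtain ⟨y, hy, hblock⟩ := isCompact_TP.exists_mem_extremePoints_support_subset
      (fun y hy => hy.1) (exists_mem_TP_block hu hv huv hI hIu hIJ)
    have hle := ncard_support_le_finrank hy _ fun z hz =>
      rowColSums_mem_ker_partialSumDiff_prod fun i j h => hblock i j (mt (hz i j) h)
    have hdim := finrank_ker_partialSumDiff_prod J hI hIu
    have := hnd y hy
    simp only [Fintype.card_fin] at hdim
    omega
  · intro hno y hy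
    have hle := ncard_support_le_finrank hy (ker (partialSumDiff univ univ))
      fun _ _ => rowColSums_mem_ker_partialSumDiff (by simp)
    have hdim := finrank_ker_partialSumDiff (univ : Finset (Fin N2))
      (univ_nonempty_iff.2 (Fin.pos_iff_nonempty.1 hN1))
    simp only [Fintype.card_fin] at hdim
    by_contra hne
    exact hno (exists_partialSums_eq_of_ncard_support_add_one_lt hN1 hu hv hy.1 (by omega))

theorem nondegenerate_iff_no_equal_partial_sums (N1 N2 : ℕ) (hN1 : 0 < N1) (hN2 : 0 < N2)
    (u : Fin N1 → ℝ) (v : Fin N2 → ℝ)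
    (hu : ∀ i, 0 < u i) (hv : ∀ j, 0 < v j)
    (huv : ∑ i, u i = ∑ j, v j) :
    Nondeg N1 N2 u v ↔
      ¬ ∃ (I : Finset (Fin N1)) (J : Finset (Fin N2)),
          I.Nonempty ∧ I ≠ Finset.univ ∧ J.Nonempty ∧ J ≠ Finset.univ ∧
          ∑ i ∈ I, u i = ∑ j ∈ J, v j :=
  nondegenerate_iff_no_equal_partial_sums_general N1 N2 hN1 u v hu hv huv
end

section
/- Let TP(u,v) be a non-degenerate transportation polytope, let F be the support tree of a fixed vertex of TP(u,v), and let (C,S) be a partially shaded tree for F. If some well-connected component of (C,S) contains no open node, then C is fully shaded; that is, S equals the edge set of C, and consequently C = F. -/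
open scoped BigOperators

def bipGraph {N1 N2 : ℕ} (A : Set (Fin N1 × Fin N2)) : SimpleGraph (Fin N1 ⊕ Fin N2) where
  Adj x y := (∃ p ∈ A, x = Sum.inl p.1 ∧ y = Sum.inr p.2) ∨
    (∃ p ∈ A, x = Sum.inr p.2 ∧ y = Sum.inl p.1)
  symm := by
    constructor
    rintro x y (⟨p, hp, rfl, rfl⟩ | ⟨p, hp, rfl, rfl⟩)
    · exact Or.inr ⟨p, hp, rfl, rfl⟩
    · exact Or.inl ⟨p, hp, rfl, rfl⟩
  loopless := by
    constructor
    rintro x (⟨p, hp, rfl, h⟩ | ⟨p, hp, rfl, h⟩) <;> simp at h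

def wcSupply {N1 N2 : ℕ} (F S : Set (Fin N1 × Fin N2)) (i : Fin N1) : Prop :=
  ∀ j, (i, j) ∈ F → (i, j) ∈ S

def wcDemand {N1 N2 : ℕ} (C S : Set (Fin N1 × Fin N2)) (j : Fin N2) : Prop :=
  ∀ i, (i, j) ∈ C → (i, j) ∈ S

def wcEdges {N1 N2 : ℕ} (F C S : Set (Fin N1 × Fin N2)) : Set (Fin N1 × Fin N2) :=
  {p | p ∈ S ∧ (wcSupply F S p.1 ∨ wcDemand C S p.2)}

def openNode {N1 N2 : ℕ} (F C S : Set (Fin N1 × Fin N2)) : Fin N1 ⊕ Fin N2 → Prop :=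
  Sum.elim (fun i => ¬ wcSupply F S i) (fun j => ¬ wcDemand C S j)

def UNO {N1 N2 : ℕ} (F C S : Set (Fin N1 × Fin N2)) : Prop :=
  ∀ K : (bipGraph (wcEdges F C S)).ConnectedComponent,
    ∃! z : Fin N1 ⊕ Fin N2,
      (bipGraph (wcEdges F C S)).connectedComponentMk z = K ∧ openNode F C S z

/-! Let `A`, `B` be the supply and demand nodes of a well-connected component without open nodes.
Every `F`-edge at a node of `A` and every `C`-edge at a node of `B` is a well-connected edge, so
it stays in the component. Hence the `F`-vertex ships all of `∑ A, u` into `B` and the `C`-vertex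
fills all of `∑ B, v` from `A`, giving `∑ A, u ≤ ∑ B, v ≤ ∑ A, u`. Equality forces the support of
the `C`-vertex to split into the blocks `A × B` and `Aᶜ × Bᶜ`. Such a vertex has at most
`N1 + N2 - 2` nonzero entries, since they are determined by the row and column sums, which then obey
two independent balance relations; by non-degeneracy `A` is everything, and every edge of `C` and
of `F` is shaded. -/

open Finset Filter Topology

section TransportationPolytope

variable {N1 N2 : ℕ} {u : Fin N1 → ℝ} {v : Fin N2 → ℝ} {y : Matrix (Fin N1) (Fin N2) ℝ}

lemma mem_suppSet_of_ne_zero (hy : y ∈ TP N1 N2 u v) {i : Fin N1} {j : Fin N2}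
    (h : y i j ≠ 0) : (i, j) ∈ suppSet y :=
  (hy.1 i j).lt_of_ne' h

lemma exists_mem_suppSet_of_mem_TP (hy : y ∈ TP N1 N2 u v) {j : Fin N2} (hj : 0 < v j) :
    ∃ i, (i, j) ∈ suppSet y := by
  obtain ⟨i, -, hi⟩ := exists_ne_zero_of_sum_ne_zero ((hy.2.2 j).trans_ne hj.ne')
  exact ⟨i, mem_suppSet_of_ne_zero hy hi⟩

lemma add_smul_mem_TP (hy : y ∈ TP N1 N2 u v) {d : Matrix (Fin N1) (Fin N2) ℝ}
    (hrow : ∀ i, ∑ j, d i j = 0) (hcol : ∀ j, ∑ i, d i j = 0) {t : ℝ}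
    (ht : ∀ i j, |t * d i j| ≤ y i j) : y + t • d ∈ TP N1 N2 u v := by
  obtain ⟨hnonneg, hu, hv⟩ := hy
  refine ⟨fun i j => ?_, fun i => ?_, fun j => ?_⟩
  · have := neg_abs_le (t * d i j)
    simp only [Matrix.add_apply, Matrix.smul_apply, smul_eq_mul]
    linarith [ht i j]
  · simp [sum_add_distrib, ← mul_sum, hrow, hu]
  · simp [sum_add_distrib, ← mul_sum, hcol, hv]

lemma exists_pos_mul_abs_le {ι : Type*} [Finite ι] {a d : ι → ℝ} (ha : ∀ p, 0 ≤ a p)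
    (hd : ∀ p, d p ≠ 0 → 0 < a p) : ∃ ε > 0, ∀ p, ε * |d p| ≤ a p := by
  have hsmall : ∀ p, ∀ᶠ ε in 𝓝[>] (0 : ℝ), ε * |d p| ≤ a p := fun p => by
    rcases eq_or_ne (d p) 0 with h | h
    · simp [h, ha p]
    · have hlim : Tendsto (fun ε : ℝ => ε * |d p|) (𝓝[>] 0) (𝓝 0) := by
        simpa using ((tendsto_id (x := 𝓝 (0 : ℝ))).mul_const |d p|).mono_left nhdsWithin_le_nhds
      exact (hlim.eventually_lt_const (hd p h)).mono fun _ => le_of_lt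
  exact (eventually_mem_nhdsWithin.and (eventually_all.2 hsmall)).exists

theorem eq_zero_of_mem_extremePoints (hy : y ∈ Set.extremePoints ℝ (TP N1 N2 u v))
    {d : Matrix (Fin N1) (Fin N2) ℝ} (hsupp : ∀ i j, y i j = 0 → d i j = 0)
    (hrow : ∀ i, ∑ j, d i j = 0) (hcol : ∀ j, ∑ i, d i j = 0) : d = 0 := by
  obtain ⟨ε, hε, hεd⟩ := exists_pos_mul_abs_le (a := fun p : Fin N1 × Fin N2 => y p.1 p.2)
    (d := fun p => d p.1 p.2) (fun p => hy.1.1 p.1 p.2)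
    (fun p h => (hy.1.1 p.1 p.2).lt_of_ne' fun h0 => h (hsupp _ _ h0))
  have hbound (t : ℝ) (ht : |t| = ε) (i j) : |t * d i j| ≤ y i j := by
    simpa [abs_mul, ht] using hεd (i, j)
  have hplus := add_smul_mem_TP hy.1 hrow hcol (hbound ε (abs_of_pos hε))
  have hminus := add_smul_mem_TP hy.1 hrow hcol (hbound (-ε) (by simp [abs_of_pos hε]))
  have hmid : y ∈ openSegment ℝ (y + ε • d) (y + (-ε) • d) :=
    ⟨1 / 2, 1 / 2, by norm_num, by norm_num, by norm_num, by module⟩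
  have : ε • d = 0 := by simpa using hy.2 hplus hminus hmid
  exact (smul_eq_zero.1 this).resolve_left hε.ne'

end TransportationPolytope

section BlockSums

variable {m n : Type*} [Fintype m] [Fintype n]

lemma sum_sum_eq_sum_sum_of_block {α : Type*} [AddCommMonoid α] {d : m → n → α}
    {A : Finset m} {B : Finset n} (h : ∀ i j, d i j ≠ 0 → (i ∈ A ↔ j ∈ B)) :
    ∑ i ∈ A, ∑ j, d i j = ∑ j ∈ B, ∑ i, d i j := by
  classical
  have hpt (i : m) (j : n) : (if i ∈ A then d i j else 0) = if j ∈ B then d i j else 0 := by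
    by_cases hd : d i j = 0
    · simp [hd]
    · simp [h i j hd]
  calc ∑ i ∈ A, ∑ j, d i j = ∑ i, ∑ j, if i ∈ A then d i j else 0 := by
        simp [Finset.sum_ite_mem]
    _ = ∑ j, ∑ i, if j ∈ B then d i j else 0 := by simp_rw [hpt]; exact sum_comm
    _ = ∑ j ∈ B, ∑ i, d i j := by simp [Finset.sum_ite_mem]

variable (m n) in
def rowColSums : Matrix m n ℝ →ₗ[ℝ] (m → ℝ) × (n → ℝ) where
  toFun d := (fun i => ∑ j, d i j, fun j => ∑ i, d i j)
  map_add' d e := by ext <;> simp [sum_add_distrib]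
  map_smul' c d := by ext <;> simp [mul_sum]

def blockImbalance (A : Finset m) (B : Finset n) : (m → ℝ) × (n → ℝ) →ₗ[ℝ] ℝ where
  toFun rc := ∑ i ∈ A, rc.1 i - ∑ j ∈ B, rc.2 j
  map_add' _ _ := by simp only [Prod.fst_add, Prod.snd_add, Pi.add_apply, sum_add_distrib]; ring
  map_smul' _ _ := by simp [mul_sum, mul_sub]

lemma blockImbalance_rowColSums {d : Matrix m n ℝ} {A : Finset m} {B : Finset n}
    (h : ∀ i j, d i j ≠ 0 → (i ∈ A ↔ j ∈ B)) : blockImbalance A B (rowColSums m n d) = 0 :=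
  sub_eq_zero.2 (sum_sum_eq_sum_sum_of_block h)

end BlockSums

theorem ncard_support_add_two_le {N1 N2 : ℕ} {u : Fin N1 → ℝ} {v : Fin N2 → ℝ}
    {y : Matrix (Fin N1) (Fin N2) ℝ} (hy : y ∈ Set.extremePoints ℝ (TP N1 N2 u v))
    {A : Finset (Fin N1)} {B : Finset (Fin N2)} (hsplit : ∀ i j, y i j ≠ 0 → (i ∈ A ↔ j ∈ B))
    {i0 i1 : Fin N1} (hi0 : i0 ∈ A) (hi1 : i1 ∉ A) :
    {p : Fin N1 × Fin N2 | y p.1 p.2 ≠ 0}.ncard + 2 ≤ N1 + N2 := by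
  classical
  set E : Finset (Fin N1 × Fin N2) := {p | y p.1 p.2 ≠ 0}
  have hE : {p : Fin N1 × Fin N2 | y p.1 p.2 ≠ 0}.ncard = #E := by
    rw [Set.ncard_eq_toFinset_card']; simp [E]
  let extend : (E → ℝ) →ₗ[ℝ] Matrix (Fin N1) (Fin N2) ℝ :=
    (LinearEquiv.curry ℝ ℝ _ _).toLinearMap ∘ₗ Function.ExtendByZero.linearMap ℝ Subtype.val
  have extend_apply (c : E → ℝ) (p : E) : extend c p.1.1 p.1.2 = c p :=
    Subtype.val_injective.extend_apply c 0 p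
  have extend_eq_zero (c : E → ℝ) (i j) (hij : y i j = 0) : extend c i j = 0 :=
    Function.extend_apply' _ _ (i, j) fun ⟨p, hp⟩ => by
      simpa [E, hij] using (hp ▸ p.2 : (i, j) ∈ E)
  have extend_split (c : E → ℝ) (i j) (h : extend c i j ≠ 0) : i ∈ A ↔ j ∈ B :=
    hsplit i j fun hij => h (extend_eq_zero c i j hij)
  -- `Φ` is injective with image in `ker ψ`, and `ker ψ` has dimension `N1 + N2 - 2`
  let Φ := rowColSums (Fin N1) (Fin N2) ∘ₗ extend
  let ψ := (blockImbalance A B).prod (blockImbalance Aᶜ Bᶜ)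
  have hΦ_inj : Function.Injective Φ := by
    rw [← LinearMap.ker_eq_bot, LinearMap.ker_eq_bot']
    intro c hc
    have h0 : extend c = 0 := eq_zero_of_mem_extremePoints hy (extend_eq_zero c)
      (fun i => congrFun (congrArg Prod.fst hc) i) (fun j => congrFun (congrArg Prod.snd hc) j)
    funext p
    simpa [h0] using (extend_apply c p).symm
  have hψΦ (c : E → ℝ) : Φ c ∈ LinearMap.ker ψ := by
    refine Prod.ext (blockImbalance_rowColSums (extend_split c)) (blockImbalance_rowColSums ?_)
    intro i j h
    simpa [not_iff_not] using extend_split c i j h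
  have hψ_surj : Function.Surjective ψ := by
    rintro ⟨a, b⟩
    refine ⟨(Pi.single i0 a + Pi.single i1 b, 0), ?_⟩
    simp [ψ, blockImbalance, sum_add_distrib, sum_pi_single', hi0, hi1]
  have hker : #E ≤ Module.finrank ℝ (LinearMap.ker ψ) := by
    simpa using LinearMap.finrank_le_finrank_of_injective
      (f := Φ.codRestrict (LinearMap.ker ψ) hψΦ) fun c c' h => hΦ_inj (congrArg Subtype.val h)
  have hrank := LinearMap.finrank_range_add_finrank_ker ψ
  rw [LinearMap.range_eq_top.2 hψ_surj, finrank_top] at hrank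
  simp only [Module.finrank_prod, Module.finrank_self, Module.finrank_fintype_fun_eq_card,
    Fintype.card_fin] at hrank
  omega

section MassBalance

variable {N1 N2 : ℕ} {u : Fin N1 → ℝ} {v : Fin N2 → ℝ}

lemma sum_sub_sum_eq_of_mem_TP {y : Matrix (Fin N1) (Fin N2) ℝ} (hy : y ∈ TP N1 N2 u v)
    (A : Finset (Fin N1)) (B : Finset (Fin N2)) :
    ∑ i ∈ A, u i - ∑ j ∈ B, v j = ∑ p ∈ A ×ˢ Bᶜ, y p.1 p.2 - ∑ p ∈ Aᶜ ×ˢ B, y p.1 p.2 := by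
  obtain ⟨-, hu, hv⟩ := hy
  have hA : ∑ i ∈ A, u i = ∑ i ∈ A, ∑ j ∈ B, y i j + ∑ i ∈ A, ∑ j ∈ Bᶜ, y i j := by
    rw [← sum_add_distrib]
    exact sum_congr rfl fun i _ => by rw [sum_add_sum_compl, hu]
  have hB : ∑ j ∈ B, v j = ∑ j ∈ B, ∑ i ∈ A, y i j + ∑ j ∈ B, ∑ i ∈ Aᶜ, y i j := by
    rw [← sum_add_distrib]
    exact sum_congr rfl fun j _ => by rw [sum_add_sum_compl, hv]
  rw [hA, hB, sum_product, sum_product_right, sum_comm (s := B)]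
  ring

theorem block_split_of_supports_closed {yF yC : Matrix (Fin N1) (Fin N2) ℝ}
    (hyF : yF ∈ TP N1 N2 u v) (hyC : yC ∈ TP N1 N2 u v) {A : Finset (Fin N1)}
    {B : Finset (Fin N2)} (hF : ∀ i ∈ A, ∀ j, (i, j) ∈ suppSet yF → j ∈ B)
    (hC : ∀ j ∈ B, ∀ i, (i, j) ∈ suppSet yC → i ∈ A) :
    ∀ i j, yC i j ≠ 0 → (i ∈ A ↔ j ∈ B) := by
  have hF0 : ∑ p ∈ A ×ˢ Bᶜ, yF p.1 p.2 = 0 := sum_eq_zero fun p hp => by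
    simp only [mem_product, mem_compl] at hp
    by_contra h
    exact hp.2 (hF _ hp.1 _ (mem_suppSet_of_ne_zero hyF h))
  have hC0 : ∑ p ∈ Aᶜ ×ˢ B, yC p.1 p.2 = 0 := sum_eq_zero fun p hp => by
    simp only [mem_product, mem_compl] at hp
    by_contra h
    exact hp.1 (hC _ hp.2 _ (mem_suppSet_of_ne_zero hyC h))
  have hCout : ∑ p ∈ A ×ˢ Bᶜ, yC p.1 p.2 = 0 := by
    linarith [sum_sub_sum_eq_of_mem_TP hyF A B, sum_sub_sum_eq_of_mem_TP hyC A B,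
      sum_nonneg fun p (_ : p ∈ Aᶜ ×ˢ B) => hyF.1 p.1 p.2,
      sum_nonneg fun p (_ : p ∈ A ×ˢ Bᶜ) => hyC.1 p.1 p.2]
  rw [sum_eq_zero_iff_of_nonneg fun p _ => hyC.1 p.1 p.2] at hCout
  intro i j h
  refine ⟨fun hi => ?_, fun hj => hC j hj i (mem_suppSet_of_ne_zero hyC h)⟩
  by_contra hj
  exact h (hCout (i, j) (by simp [hi, hj]))

end MassBalance

theorem Nondeg.eq_univ_of_block_split {N1 N2 : ℕ} {u : Fin N1 → ℝ} {v : Fin N2 → ℝ}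
    (hnd : Nondeg N1 N2 u v) {y : Matrix (Fin N1) (Fin N2) ℝ}
    (hy : y ∈ Set.extremePoints ℝ (TP N1 N2 u v)) {A : Finset (Fin N1)} {B : Finset (Fin N2)}
    (hsplit : ∀ i j, y i j ≠ 0 → (i ∈ A ↔ j ∈ B)) (hA : A.Nonempty) : A = univ := by
  obtain ⟨i0, hi0⟩ := hA
  by_contra hne
  obtain ⟨i1, hi1⟩ : ∃ i1, i1 ∉ A := by simpa [eq_univ_iff_forall] using hne
  have hle := ncard_support_add_two_le hy hsplit hi0 hi1
  have heq := hnd y hy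
  omega

section ShadedTree

variable {N1 N2 : ℕ} {F C S : Set (Fin N1 × Fin N2)} {x : Fin N1 ⊕ Fin N2}

open Classical in
noncomputable def wcComponentSupply (F C S : Set (Fin N1 × Fin N2)) (x : Fin N1 ⊕ Fin N2) :
    Finset (Fin N1) :=
  {i | (bipGraph (wcEdges F C S)).Reachable x (.inl i)}

open Classical in
noncomputable def wcComponentDemand (F C S : Set (Fin N1 × Fin N2)) (x : Fin N1 ⊕ Fin N2) :
    Finset (Fin N2) :=
  {j | (bipGraph (wcEdges F C S)).Reachable x (.inr j)}

@[simp]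
lemma mem_wcComponentSupply {i : Fin N1} :
    i ∈ wcComponentSupply F C S x ↔ (bipGraph (wcEdges F C S)).Reachable x (.inl i) := by
  simp [wcComponentSupply]

@[simp]
lemma mem_wcComponentDemand {j : Fin N2} :
    j ∈ wcComponentDemand F C S x ↔ (bipGraph (wcEdges F C S)).Reachable x (.inr j) := by
  simp [wcComponentDemand]

variable (hx : ∀ z, (bipGraph (wcEdges F C S)).Reachable x z → ¬ openNode F C S z)
include hx

lemma wcSupply_of_mem_wcComponentSupply {i : Fin N1} (hi : i ∈ wcComponentSupply F C S x) :
    wcSupply F S i :=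
  not_not.1 (hx (.inl i) (mem_wcComponentSupply.1 hi))

lemma wcDemand_of_mem_wcComponentDemand {j : Fin N2} (hj : j ∈ wcComponentDemand F C S x) :
    wcDemand C S j :=
  not_not.1 (hx (.inr j) (mem_wcComponentDemand.1 hj))

lemma mem_wcComponentDemand_of_mem {i : Fin N1} (hi : i ∈ wcComponentSupply F C S x)
    {j : Fin N2} (hij : (i, j) ∈ F) : j ∈ wcComponentDemand F C S x := by
  have hwc := wcSupply_of_mem_wcComponentSupply hx hi
  have hadj : (bipGraph (wcEdges F C S)).Adj (.inl i) (.inr j) :=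
    Or.inl ⟨(i, j), ⟨hwc j hij, Or.inl hwc⟩, rfl, rfl⟩
  exact mem_wcComponentDemand.2 ((mem_wcComponentSupply.1 hi).trans hadj.reachable)

lemma mem_wcComponentSupply_of_mem {j : Fin N2} (hj : j ∈ wcComponentDemand F C S x)
    {i : Fin N1} (hij : (i, j) ∈ C) : i ∈ wcComponentSupply F C S x := by
  have hwc := wcDemand_of_mem_wcComponentDemand hx hj
  have hadj : (bipGraph (wcEdges F C S)).Adj (.inr j) (.inl i) :=
    Or.inr ⟨(i, j), ⟨hwc i hij, Or.inr hwc⟩, rfl, rfl⟩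
  exact mem_wcComponentSupply.2 ((mem_wcComponentDemand.1 hj).trans hadj.reachable)

lemma wcComponentSupply_nonempty (hC : ∀ j, ∃ i, (i, j) ∈ C) :
    (wcComponentSupply F C S x).Nonempty := by
  rcases x with i | j
  · exact ⟨i, mem_wcComponentSupply.2 .rfl⟩
  · obtain ⟨i, hij⟩ := hC j
    exact ⟨i, mem_wcComponentSupply_of_mem hx (mem_wcComponentDemand.2 .rfl) hij⟩

end ShadedTree

theorem component_without_open_node_fully_shaded_general (N1 N2 : ℕ)
    (u : Fin N1 → ℝ) (v : Fin N2 → ℝ)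
    (hv : ∀ j, 0 < v j)
    (hnd : Nondeg N1 N2 u v)
    (yF yC : Matrix (Fin N1) (Fin N2) ℝ)
    (hyF : yF ∈ Set.extremePoints ℝ (TP N1 N2 u v))
    (hyC : yC ∈ Set.extremePoints ℝ (TP N1 N2 u v))
    (S : Set (Fin N1 × Fin N2)) (hS : S ⊆ suppSet yC ∩ suppSet yF)
    (hcomp : ∃ x : Fin N1 ⊕ Fin N2,
      ∀ z : Fin N1 ⊕ Fin N2,
        (bipGraph (wcEdges (suppSet yF) (suppSet yC) S)).Reachable x z →
        ¬ openNode (suppSet yF) (suppSet yC) S z) :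
    S = suppSet yC ∧ suppSet yC = suppSet yF := by
  obtain ⟨x, hx⟩ := hcomp
  set A := wcComponentSupply (suppSet yF) (suppSet yC) S x
  set B := wcComponentDemand (suppSet yF) (suppSet yC) S x
  have hsplit : ∀ i j, yC i j ≠ 0 → (i ∈ A ↔ j ∈ B) :=
    block_split_of_supports_closed hyF.1 hyC.1 (fun _ hi _ => mem_wcComponentDemand_of_mem hx hi)
      (fun _ hj _ => mem_wcComponentSupply_of_mem hx hj)
  have hA : ∀ i, i ∈ A := eq_univ_iff_forall.1 <| hnd.eq_univ_of_block_split hyC hsplit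
    (wcComponentSupply_nonempty hx fun j => exists_mem_suppSet_of_mem_TP hyC.1 (hv j))
  have hSC : S = suppSet yC := by
    refine Set.Subset.antisymm (fun p hp => (hS hp).1) fun p hp => ?_
    have hj : p.2 ∈ B := (hsplit p.1 p.2 hp.ne').1 (hA p.1)
    exact wcDemand_of_mem_wcComponentDemand hx hj p.1 hp
  refine ⟨hSC, hSC ▸ Set.Subset.antisymm (fun p hp => (hS hp).2) fun p hp => ?_⟩
  exact wcSupply_of_mem_wcComponentSupply hx (hA p.1) p.2 hp

theorem component_without_open_node_fully_shaded (N1 N2 : ℕ) (hN1 : 0 < N1) (hN2 : 0 < N2)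
    (u : Fin N1 → ℝ) (v : Fin N2 → ℝ)
    (hu : ∀ i, 0 < u i) (hv : ∀ j, 0 < v j)
    (huv : ∑ i, u i = ∑ j, v j)
    (hnd : Nondeg N1 N2 u v)
    (yF yC : Matrix (Fin N1) (Fin N2) ℝ)
    (hyF : yF ∈ Set.extremePoints ℝ (TP N1 N2 u v))
    (hyC : yC ∈ Set.extremePoints ℝ (TP N1 N2 u v))
    (S : Set (Fin N1 × Fin N2)) (hS : S ⊆ suppSet yC ∩ suppSet yF)
    (hcomp : ∃ x : Fin N1 ⊕ Fin N2,
      ∀ z : Fin N1 ⊕ Fin N2,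
        (bipGraph (wcEdges (suppSet yF) (suppSet yC) S)).Reachable x z →
        ¬ openNode (suppSet yF) (suppSet yC) S z) :
    S = suppSet yC ∧ suppSet yC = suppSet yF :=
  component_without_open_node_fully_shaded_general N1 N2 u v hv hnd yF yC hyF hyC S hS hcomp
end

section
/- Let y and y' be two points of the transportation polytope TP(u,v) and let (i₁, j₁) be a pair with y'_{i₁ j₁} > y_{i₁ j₁}. Then there exist an integer k ≥ 2, distinct supply nodes i₁, …, i_k and distinct demand nodes j₁, …, j_k forming a cycle i₁ j₁ i₂ j₂ ⋯ i_k j_k i₁ in the complete bipartite graph, such that y'_{i_t j_t} > y_{i_t j_t} for all t = 1, …, k and y'_{i_{t+1} j_t} < y_{i_{t+1} j_t} for all t = 1, …, k (indices taken modulo k, so i_{k+1} = i₁). That is, the difference y' − y admits through any edge where it is positive an alternating cycle of edges on which y' − y is alternately positive and negative. -/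
open scoped BigOperators

/-!
The difference `z = y' - y` has zero row and column sums. Consider the digraph on supply and
demand nodes with an arc `i → j` where `z i j > 0` and an arc `j → i` where `z i j < 0`. If `i₁`
were not reachable from `j₁`, then summing `z` over the reachable rows and columns would force
`z i₁ j₁ = 0`. So a shortest path from `j₁` to `i₁` exists; it repeats no node, and closed by the
arc `i₁ → j₁` it is the alternating cycle.
-/

open Function Set Relation

section Walk

variable {V : Type*} (r : V → V → Prop)

def IsWalk (f : ℕ → V) (n : ℕ) : Prop := ∀ m < n, r (f m) (f (m + 1))

variable {r}

theorem exists_walk_of_reflTransGen {a b : V} (h : ReflTransGen r a b) :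
    ∃ n, ∃ f : ℕ → V, f 0 = a ∧ f n = b ∧ IsWalk r f n := by
  induction h with
  | refl => exact ⟨0, fun _ => a, rfl, rfl, fun m hm => absurd hm m.not_lt_zero⟩
  | @tail b c _ hbc ih =>
    obtain ⟨n, f, hf0, hfn, hf⟩ := ih
    refine ⟨n + 1, fun m => if m ≤ n then f m else c, by simpa using hf0, by simp, ?_⟩
    intro m hm
    rcases Nat.lt_or_ge m n with h | h
    · simpa [h.le, Nat.succ_le_of_lt h] using hf m h
    · obtain rfl : m = n := by omega
      simpa [hfn] using hbc

theorem IsWalk.shortcut {f : ℕ → V} {n p q : ℕ} (hf : IsWalk r f n) (hpq : p ≤ q) (hq : q ≤ n)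
    (hfpq : f p = f q) :
    IsWalk r (fun m => if m ≤ p then f m else f (m + (q - p))) (n - (q - p)) := by
  intro m hm
  show r (if m ≤ p then f m else f (m + (q - p)))
    (if m + 1 ≤ p then f (m + 1) else f (m + 1 + (q - p)))
  rcases lt_trichotomy m p with h | rfl | h
  · rw [if_pos h.le, if_pos (Nat.succ_le_of_lt h)]
    exact hf m (by omega)
  · rw [if_pos le_rfl, if_neg (by omega), hfpq, show m + 1 + (q - m) = q + 1 by omega]
    exact hf q (by omega)
  · rw [if_neg (by omega), if_neg (by omega), show m + 1 + (q - p) = m + (q - p) + 1 by omega]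
    exact hf _ (by omega)

/-- A shortest walk visits no vertex twice. -/
theorem exists_injOn_walk_of_reflTransGen {a b : V} (h : ReflTransGen r a b) :
    ∃ n, ∃ f : ℕ → V, f 0 = a ∧ f n = b ∧ IsWalk r f n ∧ InjOn f (Iic n) := by
  classical
  have hex := exists_walk_of_reflTransGen h
  obtain ⟨f, hf0, hfn, hf⟩ := Nat.find_spec hex
  refine ⟨Nat.find hex, f, hf0, hfn, hf, fun p hp q hq hpq => ?_⟩
  by_contra hne
  wlog hlt : p < q generalizing p q
  · exact this q hq p hp hpq.symm (Ne.symm hne) (by omega)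
  rw [mem_Iic] at hp hq
  refine Nat.find_min hex (m := Nat.find hex - (q - p)) (by omega)
    ⟨_, by simpa using hf0, ?_, hf.shortcut hlt.le hq hpq⟩
  by_cases hqn : q = Nat.find hex
  · rw [if_pos (by omega), show Nat.find hex - (q - p) = p by omega, hpq, hqn, hfn]
  · rw [if_neg (by omega), show Nat.find hex - (q - p) + (q - p) = Nat.find hex by omega, hfn]

/-- A cycle of length `n + 1` is encoded as an `(n + 1)`-periodic sequence. -/
theorem exists_periodic_cycle_of_walk {f : ℕ → V} {n : ℕ} (hf : IsWalk r f n)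
    (hinj : InjOn f (Iic n)) (hback : r (f n) (f 0)) :
    ∃ g : ℕ → V, Periodic g (n + 1) ∧ (∀ m, r (g m) (g (m + 1))) ∧ InjOn g (Iio (n + 1)) ∧
      g 0 = f n ∧ g 1 = f 0 := by
  have hrot : ∀ m < n + 1, (m + n) % (n + 1) = if m = 0 then n else m - 1 := by
    intro m hm
    split_ifs with h
    · simp [h]
    · rw [show m + n = m - 1 + (n + 1) by omega, Nat.add_mod_right, Nat.mod_eq_of_lt (by omega)]
  refine ⟨fun m => f ((m + n) % (n + 1)), fun m => ?_, fun m => ?_, fun p hp q hq hpq => ?_, ?_, ?_⟩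
  · simp only [Nat.add_right_comm m (n + 1), Nat.add_mod_right]
  · have hs : (m + n) % (n + 1) < n + 1 := Nat.mod_lt _ n.succ_pos
    have hsucc : (m + 1 + n) % (n + 1) = ((m + n) % (n + 1) + 1) % (n + 1) := by
      rw [Nat.mod_add_mod, Nat.add_right_comm]
    simp only [hsucc]
    rcases Nat.lt_or_ge ((m + n) % (n + 1)) n with h | h
    · rw [Nat.mod_eq_of_lt (by omega : (m + n) % (n + 1) + 1 < n + 1)]
      exact hf _ h
    · rw [show (m + n) % (n + 1) = n by omega, Nat.mod_self]
      exact hback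
  · rw [mem_Iio] at hp hq
    have := hinj (by rw [hrot p hp, mem_Iic]; split_ifs <;> omega)
      (by rw [hrot q hq, mem_Iic]; split_ifs <;> omega) hpq
    rw [hrot p hp, hrot q hq] at this
    split_ifs at this <;> omega
  · simp
  · rcases n with _ | n
    · simp
    · simp [hrot 1 (by omega)]

end Walk

theorem Function.Periodic.comp_val_add_one {α : Type*} {k : ℕ} [NeZero k] {a : ℕ → α}
    (ha : Periodic a k) (t : ZMod k) : a (t + 1).val = a (t.val + 1) := by
  rw [ZMod.val_add, ZMod.val_one_eq_one_mod, Nat.add_mod_mod, ha.map_mod_nat]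

theorem Set.InjOn.injective_comp_val {α : Type*} {k : ℕ} [NeZero k] {a : ℕ → α}
    (ha : InjOn a (Iio k)) : Injective (a ∘ ZMod.val : ZMod k → α) :=
  fun s t h => ZMod.val_injective k (ha (ZMod.val_lt s) (ZMod.val_lt t) h)

section Cut

variable {ι κ R : Type*} [Fintype ι] [Fintype κ]
  [AddCommGroup R] [LinearOrder R] [IsOrderedAddMonoid R]

/-- The sum of `z` over `A × B` is `≥ 0` by the row sums and `≤ 0` by the column sums. -/
theorem Matrix.apply_eq_zero_of_cut {z : Matrix ι κ R} (hrow : ∀ i, ∑ j, z i j = 0)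
    (hcol : ∀ j, ∑ i, z i j = 0) {A : Finset ι} {B : Finset κ}
    (hA : ∀ i ∈ A, ∀ j ∉ B, z i j ≤ 0) (hB : ∀ j ∈ B, ∀ i ∉ A, 0 ≤ z i j)
    {i : ι} {j : κ} (hi : i ∉ A) (hj : j ∈ B) : z i j = 0 := by
  classical
  have hrowA : ∑ i ∈ A, ∑ j ∈ B, z i j + ∑ i ∈ A, ∑ j ∈ Bᶜ, z i j = 0 := by
    rw [← Finset.sum_add_distrib]
    exact Finset.sum_eq_zero fun i _ => by rw [Finset.sum_add_sum_compl, hrow]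
  have hcolB : ∑ i ∈ A, ∑ j ∈ B, z i j + ∑ j ∈ B, ∑ i ∈ Aᶜ, z i j = 0 := by
    rw [Finset.sum_comm (s := A) (t := B) (f := z), ← Finset.sum_add_distrib]
    exact Finset.sum_eq_zero fun j _ => by rw [Finset.sum_add_sum_compl, hcol]
  have hout : ∑ i ∈ A, ∑ j ∈ Bᶜ, z i j ≤ 0 :=
    Finset.sum_nonpos fun i hi => Finset.sum_nonpos fun j hj => hA i hi j (Finset.mem_compl.1 hj)
  have hin_nonneg : ∀ j ∈ B, 0 ≤ ∑ i ∈ Aᶜ, z i j :=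
    fun j hj => Finset.sum_nonneg fun i hi => hB j hj i (Finset.mem_compl.1 hi)
  have hin : ∑ j ∈ B, ∑ i ∈ Aᶜ, z i j = 0 := by
    refine le_antisymm ?_ (Finset.sum_nonneg hin_nonneg)
    rw [eq_neg_of_add_eq_zero_right hcolB, neg_nonpos, eq_neg_of_add_eq_zero_left hrowA]
    exact neg_nonneg.2 hout
  have hcol_j := (Finset.sum_eq_zero_iff_of_nonneg hin_nonneg).1 hin j hj
  exact (Finset.sum_eq_zero_iff_of_nonneg fun i hi => hB j hj i (Finset.mem_compl.1 hi)).1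
    hcol_j i (Finset.mem_compl.2 hi)

end Cut

section AltStep

variable {ι κ R : Type*}

/-- Alternating cycles of `z` are the cycles of this digraph on supply (`inl`) and demand (`inr`)
nodes. -/
def altStep [Zero R] [LT R] (z : Matrix ι κ R) : ι ⊕ κ → ι ⊕ κ → Prop
  | .inl i, .inr j => 0 < z i j
  | .inr j, .inl i => z i j < 0
  | _, _ => False

variable [Zero R] [LT R] {z : Matrix ι κ R}

theorem altStep_isLeft {x y : ι ⊕ κ} (h : altStep z x y) : y.isLeft = !x.isLeft := by
  rcases x with i | j <;> rcases y with i' | j' <;> first | rfl | exact h.elim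

theorem isLeft_iff_even_of_altStep {g : ℕ → ι ⊕ κ} (hg : ∀ m, altStep z (g m) (g (m + 1)))
    (h0 : (g 0).isLeft) (m : ℕ) : (g m).isLeft ↔ Even m := by
  induction m with
  | zero => simpa using h0
  | succ m ih => rw [altStep_isLeft (hg m), Nat.even_add_one, ← ih]; simp

end AltStep

section AlternatingCycle

variable {ι κ R : Type*}

theorem exists_zmod_cycle_of_periodic_altStep [Preorder R] [Zero R] {z : Matrix ι κ R}
    {L : ℕ} {g : ℕ → ι ⊕ κ} (hper : Periodic g L) (hL : 0 < L)
    (hstep : ∀ m, altStep z (g m) (g (m + 1))) (hinj : InjOn g (Iio L))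
    {i₁ : ι} {j₁ : κ} (hg0 : g 0 = .inl i₁) (hg1 : g 1 = .inr j₁) :
    ∃ k : ℕ, 2 ≤ k ∧ ∃ (σ : ZMod k → ι) (δ : ZMod k → κ),
      Injective σ ∧ Injective δ ∧ σ 0 = i₁ ∧ δ 0 = j₁ ∧
      (∀ t, 0 < z (σ t) (δ t)) ∧ ∀ t, z (σ (t + 1)) (δ t) < 0 := by
  have hpar := isLeft_iff_even_of_altStep hstep (by simp [hg0])
  obtain ⟨k, rfl⟩ : Even L := (hpar L).1 (by rw [← zero_add L, hper, hg0]; rfl)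
  have : NeZero k := ⟨by omega⟩
  have hleft (m : ℕ) : ∃ i, g (2 * m) = .inl i := Sum.isLeft_iff.1 ((hpar _).2 (even_two_mul m))
  have hright (m : ℕ) : ∃ j, g (2 * m + 1) = .inr j :=
    Sum.isRight_iff.1 (Sum.not_isLeft.1 fun h => Nat.not_even_two_mul_add_one m ((hpar _).1 h))
  choose a ha using hleft
  choose b hb using hright
  have hpos (m : ℕ) : 0 < z (a m) (b m) := by
    have := hstep (2 * m)
    rwa [ha, hb] at this
  have hneg (m : ℕ) : z (a (m + 1)) (b m) < 0 := by
    have := hstep (2 * m + 1)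
    rwa [hb, show 2 * m + 1 + 1 = 2 * (m + 1) by ring, ha] at this
  have hper_a : Periodic a k := fun m => Sum.inl_injective <| by
    rw [← ha, ← ha, mul_add, two_mul k, hper]
  have hper_b : Periodic b k := fun m => Sum.inr_injective <| by
    rw [← hb, ← hb, mul_add, add_right_comm, two_mul k, hper]
  have hinj_a : InjOn a (Iio k) := fun p hp q hq h => by
    have := hinj (show 2 * p < k + k by rw [mem_Iio] at hp; omega)
      (show 2 * q < k + k by rw [mem_Iio] at hq; omega) (by rw [ha, ha, h])
    omega
  have hinj_b : InjOn b (Iio k) := fun p hp q hq h => by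
    have := hinj (show 2 * p + 1 < k + k by rw [mem_Iio] at hp; omega)
      (show 2 * q + 1 < k + k by rw [mem_Iio] at hq; omega) (by rw [hb, hb, h])
    omega
  refine ⟨k, ?_, a ∘ ZMod.val, b ∘ ZMod.val, hinj_a.injective_comp_val, hinj_b.injective_comp_val,
    Sum.inl_injective (β := κ) ?_, Sum.inr_injective (α := ι) ?_, fun t => hpos _, fun t => ?_⟩
  · by_contra! hk
    obtain rfl : k = 1 := by omega
    exact (hpos 0).not_gt (hper_a 0 ▸ hneg 0)
  · simpa [← ha] using hg0
  · simpa [← hb] using hg1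
  · simpa only [comp_apply, hper_a.comp_val_add_one] using hneg _

variable [AddCommGroup R] [LinearOrder R] [IsOrderedAddMonoid R] {z : Matrix ι κ R}

theorem reflTransGen_altStep_of_pos [Fintype ι] [Fintype κ] (hrow : ∀ i, ∑ j, z i j = 0)
    (hcol : ∀ j, ∑ i, z i j = 0) {i₁ : ι} {j₁ : κ} (hpos : 0 < z i₁ j₁) :
    ReflTransGen (altStep z) (.inr j₁) (.inl i₁) := by
  classical
  by_contra hnot
  let A := Finset.univ.filter fun i => ReflTransGen (altStep z) (.inr j₁) (.inl i)
  let B := Finset.univ.filter fun j => ReflTransGen (altStep z) (.inr j₁) (.inr j)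
  refine hpos.ne' (Matrix.apply_eq_zero_of_cut hrow hcol (A := A) (B := B) ?_ ?_
    (by simpa [A] using hnot) (by simpa [B] using ReflTransGen.refl))
  · intro i hi j hj
    by_contra! h
    have hstep : altStep z (.inl i) (.inr j) := h
    exact hj (by simpa [B] using (Finset.mem_filter.1 hi).2.tail hstep)
  · intro j hj i hi
    by_contra! h
    have hstep : altStep z (.inr j) (.inl i) := h
    exact hi (by simpa [A] using (Finset.mem_filter.1 hj).2.tail hstep)

theorem exists_alternating_cycle [Fintype ι] [Fintype κ] (hrow : ∀ i, ∑ j, z i j = 0)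
    (hcol : ∀ j, ∑ i, z i j = 0) {i₁ : ι} {j₁ : κ} (hpos : 0 < z i₁ j₁) :
    ∃ k : ℕ, 2 ≤ k ∧ ∃ (σ : ZMod k → ι) (δ : ZMod k → κ),
      Injective σ ∧ Injective δ ∧ σ 0 = i₁ ∧ δ 0 = j₁ ∧
      (∀ t, 0 < z (σ t) (δ t)) ∧ ∀ t, z (σ (t + 1)) (δ t) < 0 := by
  obtain ⟨n, f, hf0, hfn, hf, hinj⟩ :=
    exists_injOn_walk_of_reflTransGen (reflTransGen_altStep_of_pos hrow hcol hpos)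
  obtain ⟨g, hper, hstep, hginj, hg0, hg1⟩ :=
    exists_periodic_cycle_of_walk hf hinj (by rw [hfn, hf0]; exact hpos)
  exact exists_zmod_cycle_of_periodic_altStep hper n.succ_pos hstep hginj (hg0.trans hfn)
    (hg1.trans hf0)

end AlternatingCycle

theorem difference_alternating_cycle_general (N1 N2 : ℕ)
    (u : Fin N1 → ℝ) (v : Fin N2 → ℝ)
    (y y' : Matrix (Fin N1) (Fin N2) ℝ)
    (hy : y ∈ TP N1 N2 u v) (hy' : y' ∈ TP N1 N2 u v)
    (i1 : Fin N1) (j1 : Fin N2) (h : y i1 j1 < y' i1 j1) :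
    ∃ k : ℕ, 2 ≤ k ∧ ∃ (σ : ZMod k → Fin N1) (δ : ZMod k → Fin N2),
      Function.Injective σ ∧ Function.Injective δ ∧
      σ 0 = i1 ∧ δ 0 = j1 ∧
      (∀ t : ZMod k, y (σ t) (δ t) < y' (σ t) (δ t)) ∧
      (∀ t : ZMod k, y' (σ (t + 1)) (δ t) < y (σ (t + 1)) (δ t)) := by
  have hrow (i : Fin N1) : ∑ j, (y' - y) i j = 0 := by
    simp [Finset.sum_sub_distrib, hy.2.1, hy'.2.1]
  have hcol (j : Fin N2) : ∑ i, (y' - y) i j = 0 := by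
    simp [Finset.sum_sub_distrib, hy.2.2, hy'.2.2]
  obtain ⟨k, hk, σ, δ, hσ, hδ, hσ0, hδ0, hpos, hneg⟩ :=
    exists_alternating_cycle hrow hcol (sub_pos.2 h : 0 < (y' - y) i1 j1)
  exact ⟨k, hk, σ, δ, hσ, hδ, hσ0, hδ0, fun t => sub_pos.1 (hpos t), fun t => sub_neg.1 (hneg t)⟩

theorem difference_alternating_cycle (N1 N2 : ℕ) (hN1 : 0 < N1) (hN2 : 0 < N2)
    (u : Fin N1 → ℝ) (v : Fin N2 → ℝ)
    (hu : ∀ i, 0 < u i) (hv : ∀ j, 0 < v j)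
    (huv : ∑ i, u i = ∑ j, v j)
    (y y' : Matrix (Fin N1) (Fin N2) ℝ)
    (hy : y ∈ TP N1 N2 u v) (hy' : y' ∈ TP N1 N2 u v)
    (i1 : Fin N1) (j1 : Fin N2) (h : y i1 j1 < y' i1 j1) :
    ∃ k : ℕ, 2 ≤ k ∧ ∃ (σ : ZMod k → Fin N1) (δ : ZMod k → Fin N2),
      Function.Injective σ ∧ Function.Injective δ ∧
      σ 0 = i1 ∧ δ 0 = j1 ∧
      (∀ t : ZMod k, y (σ t) (δ t) < y' (σ t) (δ t)) ∧
      (∀ t : ZMod k, y' (σ (t + 1)) (δ t) < y (σ (t + 1)) (δ t)) :=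
  difference_alternating_cycle_general N1 N2 u v y y' hy hy' i1 j1 h
end
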